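/- arXiv:1010.1600 — 4 statements merged into one kernel-verified Lean document; each statement's English description precedes it below -/
import Mathlib

section
/- A topometric space X admits a topometric compactification (an embedding as a topometric subspace of a compact topometric space) if and only if X is completely regular. -/
/-!
A compact topometric space `Z` is completely regular by a Lipschitz form of the Katětov–Tong
insertion theorem. Given `u ≤ ℓ` on `Z`, with `u` upper and `ℓ` lower semicontinuous and `u`
`1`-Lipschitz, normality of `Z` yields open sets `V 0 ⊆ V 1 ⊆ ⋯` sitting between the levels of `ℓ`
and `u` at mesh `γ`, where `V k` also contains the closed `(k - i - 1) γ`-thickening of `V i`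
(these thickenings are closed by compactness and lower semicontinuity of `d`). The staircase
`γ * (first k with z ∈ V k)` is then `1`-Lipschitz up to `2γ`, and its sup-convolution with `d`
is exactly `1`-Lipschitz and still upper semicontinuous. Repeating this with `γ` halving squeezes
`u` and `ℓ` together uniformly, and the limit is continuous and `1`-Lipschitz. Applied to
truncated distances to two closed sets this gives a topometric Urysohn lemma, hence both clauses
of complete regularity, and these pass to topometric subspaces.

Conversely, a completely regular `X` embeds, via its continuous `1`-Lipschitz functions
`f : X → ℂ`, into a product of copies of the one-point compactification of `ℂ` in which `∞` is
at infinite distance from every other point; this product is compact, and the two clauses of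
complete regularity say exactly that the map is a topological embedding and an isometry.
-/

open scoped ENNReal NNReal
open Set

structure TopometricOn (X : Type*) [TopologicalSpace X] where
  d : X → X → ℝ≥0∞
  d_self : ∀ x, d x x = 0
  eq_of_d_eq_zero : ∀ x y, d x y = 0 → x = y
  d_symm : ∀ x y, d x y = d y x
  d_triangle : ∀ x y z, d x z ≤ d x y + d y z
  lsc : LowerSemicontinuous fun p : X × X => d p.1 p.2
  refines : ∀ U : Set X, IsOpen U → ∀ x ∈ U, ∃ ε > (0 : ℝ≥0∞), ∀ y, d x y < ε → y ∈ U

namespace TopometricOn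

variable {X : Type*} [TopologicalSpace X]

noncomputable def setD (T : TopometricOn X) (F G : Set X) : ℝ≥0∞ :=
  ⨅ x ∈ F, ⨅ y ∈ G, T.d x y

noncomputable def ptD (T : TopometricOn X) (x : X) (F : Set X) : ℝ≥0∞ :=
  ⨅ y ∈ F, T.d x y

def IsNormal (T : TopometricOn X) : Prop :=
  (∀ F G : Set X, IsClosed F → IsClosed G → 0 < T.setD F G →
      ∃ U V : Set X, IsOpen U ∧ IsOpen V ∧ F ⊆ U ∧ G ⊆ V ∧ Disjoint U V) ∧
  (∀ F : Set X, IsClosed F → ∀ r : ℝ≥0∞, 0 < r → IsClosed {x | T.ptD x F ≤ r})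

end TopometricOn

def TopometricOn.IsCompletelyRegular {X : Type*} [TopologicalSpace X]
    (T : TopometricOn X) : Prop :=
  (∀ F : Set X, IsClosed F → ∀ x ∉ F,
      ∃ f : X → ℂ, Continuous f ∧ (∀ a b, edist (f a) (f b) ≤ T.d a b) ∧
        ∃ t : ℂ, (∀ y ∈ F, f y = t) ∧ f x ≠ t) ∧
  (∀ x y : X, T.d x y =
      ⨆ f : {f : X → ℂ // Continuous f ∧ ∀ a b, edist (f a) (f b) ≤ T.d a b},
        edist (f.1 x) (f.1 y))

open Topology Filter Function

section Semicontinuity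

variable {α W : Type*} [TopologicalSpace α] [TopologicalSpace W]

theorem continuous_of_forall_usc_le_le_lsc {f : α → ℝ}
    (h : ∀ ε > 0, ∃ v w : α → ℝ, UpperSemicontinuous v ∧ LowerSemicontinuous w ∧
      v ≤ f ∧ f ≤ w ∧ ∀ x, w x ≤ v x + ε) :
    Continuous f := by
  refine continuous_iff_lower_upperSemicontinuous.2 ⟨fun x c hc => ?_, fun x c hc => ?_⟩
  · obtain ⟨v, w, -, hw, hvf, hfw, hwv⟩ := h ((f x - c) / 2) (by linarith)
    filter_upwards [hw x (c + (f x - c) / 2) (by linarith [hfw x])] with y hy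
    linarith [hwv y, hvf y]
  · obtain ⟨v, w, hv, -, hvf, hfw, hwv⟩ := h ((c - f x) / 2) (by linarith)
    filter_upwards [hv x (c - (c - f x) / 2) (by linarith [hvf x])] with y hy
    linarith [hwv y, hfw y]

theorem upperSemicontinuous_ciSup [CompactSpace W] {F : α → W → ℝ}
    (hF : UpperSemicontinuous (uncurry F)) (hbdd : ∀ x, BddAbove (range (F x))) :
    UpperSemicontinuous fun x => ⨆ w, F x w := by
  rcases isEmpty_or_nonempty W with _ | _
  · simp only [Real.iSup_of_isEmpty]
    exact upperSemicontinuous_const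
  intro x c hc
  obtain ⟨c', hxc', hc'c⟩ := exists_between hc
  have hnear : ∀ᶠ y in 𝓝 x, ∀ w ∈ univ, F y w < c' :=
    isCompact_univ.eventually_forall_of_forall_eventually fun w _ =>
      hF (x, w) c' ((le_ciSup (hbdd x) w).trans_lt hxc')
  filter_upwards [hnear] with y hy
  exact (ciSup_le fun w => (hy w trivial).le).trans_lt hc'c

end Semicontinuity

section FirstIndex

variable {α : Type*} {V : ℕ → Set α} {z : α} {k K : ℕ}

noncomputable def firstIndex (V : ℕ → Set α) (z : α) : ℕ := sInf {k | z ∈ V k}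

theorem mem_firstIndex (h : z ∈ V k) : z ∈ V (firstIndex V z) :=
  Nat.sInf_mem (s := {k | z ∈ V k}) ⟨k, h⟩

theorem firstIndex_le (h : z ∈ V k) : firstIndex V z ≤ k := Nat.sInf_le h

theorem notMem_of_lt_firstIndex (h : k < firstIndex V z) : z ∉ V k :=
  Nat.notMem_of_lt_sInf (s := {k | z ∈ V k}) h

variable [TopologicalSpace α]

theorem upperSemicontinuous_firstIndex (hV : ∀ k ≤ K, IsOpen (V k)) (hK : ∀ z, z ∈ V K) :
    UpperSemicontinuous (firstIndex V) := by
  refine upperSemicontinuous_iff_isOpen_preimage.2 fun y => ?_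
  convert isOpen_biUnion (s := {k | k ≤ K ∧ k < y}) fun k hk => hV k hk.1
  ext z
  simp only [mem_preimage, mem_Iio, mem_iUnion₂, exists_prop]
  exact ⟨fun hz => ⟨_, ⟨firstIndex_le (hK _), hz⟩, mem_firstIndex (hK _)⟩,
    fun ⟨_, ⟨_, hky⟩, hzk⟩ => (firstIndex_le hzk).trans_lt hky⟩

theorem lowerSemicontinuous_firstIndex (hV : ∀ k ≤ K, IsClosed (V k)) (hK : ∀ z, z ∈ V K) :
    LowerSemicontinuous (firstIndex V) := by
  refine lowerSemicontinuous_iff_isClosed_preimage.2 fun y => ?_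
  convert ((finite_Iic K).subset inter_subset_left).isClosed_biUnion
    (s := Iic K ∩ Iic y) fun k hk => hV k hk.1
  ext z
  simp only [mem_preimage, mem_Iic, mem_iUnion₂, mem_inter_iff, exists_prop]
  exact ⟨fun hz => ⟨_, ⟨firstIndex_le (hK _), hz⟩, mem_firstIndex (hK _)⟩,
    fun ⟨_, ⟨_, hky⟩, hzk⟩ => (firstIndex_le hzk).trans hky⟩

end FirstIndex

theorem Topology.isInducing_pi_of_forall_isOpen {X ι : Type*} {Y : ι → Type*}
    [TopologicalSpace X] [∀ i, TopologicalSpace (Y i)] {f : ∀ i, X → Y i}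
    (hf : ∀ i, Continuous (f i))
    (hsep : ∀ x (U : Set X), IsOpen U → x ∈ U →
      ∃ i, ∃ V : Set (Y i), IsOpen V ∧ f i x ∈ V ∧ f i ⁻¹' V ⊆ U) :
    IsInducing fun x i => f i x := by
  refine isInducing_iff_nhds.2 fun x => le_antisymm ((continuous_pi hf).tendsto x).le_comap
    fun U hU => ?_
  obtain ⟨U', hU'U, hU', hxU'⟩ := mem_nhds_iff.1 hU
  obtain ⟨i, V, hV, hxV, hVU'⟩ := hsep x U' hU' hxU'
  exact mem_comap.2 ⟨(fun y => y i) ⁻¹' V,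
    (continuous_apply i).continuousAt.preimage_mem_nhds (hV.mem_nhds hxV),
    fun y hy => hU'U (hVU' hy)⟩

namespace OnePoint

variable {E : Type*} [MetricSpace E]

noncomputable def extEdist : OnePoint E → OnePoint E → ℝ≥0∞
  | OnePoint.infty, OnePoint.infty => 0
  | OnePoint.infty, (_ : E) => ⊤
  | (_ : E), OnePoint.infty => ⊤
  | (a : E), (b : E) => edist a b

@[simp] theorem extEdist_infty_infty : extEdist (∞ : OnePoint E) (∞ : OnePoint E) = 0 := rfl
@[simp] theorem extEdist_infty_coe (b : E) : extEdist (∞ : OnePoint E) (b : OnePoint E) = ⊤ := rfl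
@[simp] theorem extEdist_coe_infty (a : E) : extEdist (a : OnePoint E) (∞ : OnePoint E) = ⊤ := rfl
@[simp] theorem extEdist_coe_coe (a b : E) : extEdist (a : OnePoint E) b = edist a b := rfl

theorem extEdist_comm (x y : OnePoint E) : extEdist x y = extEdist y x := by
  cases x <;> cases y <;> simp [edist_comm]

theorem eventually_lt_extEdist_infty_coe [ProperSpace E] (b : E) {c : ℝ≥0∞} (hc : c ≠ ⊤) :
    ∀ᶠ p in 𝓝 (∞ : OnePoint E) ×ˢ 𝓝 (b : OnePoint E), c < extEdist p.1 p.2 := by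
  set R := c.toReal + 1
  have hfar : ((↑) '' (Metric.closedBall b R)ᶜ ∪ {(∞ : OnePoint E)} : Set (OnePoint E)) ∈
      𝓝 (∞ : OnePoint E) :=
    hasBasis_nhds_infty.mem_of_mem ⟨Metric.isClosed_closedBall, isCompact_closedBall b R⟩
  have hnear : ((↑) '' Metric.ball b 1 : Set (OnePoint E)) ∈ 𝓝 (b : OnePoint E) :=
    isOpenEmbedding_coe.isOpenMap _ Metric.isOpen_ball |>.mem_nhds
      ⟨b, Metric.mem_ball_self one_pos, rfl⟩
  filter_upwards [prod_mem_prod hfar hnear]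
  rintro ⟨x, y⟩ ⟨hx | hx, ⟨y, hy, rfl⟩⟩
  · obtain ⟨x, hx, rfl⟩ := hx
    rw [extEdist_coe_coe, edist_dist, ← ENNReal.ofReal_toReal hc,
      ENNReal.ofReal_lt_ofReal_iff_of_nonneg ENNReal.toReal_nonneg]
    have := dist_triangle x y b
    have : R < dist x b := not_le.1 hx
    have : dist y b < 1 := hy
    linarith
  · rw [show x = (∞ : OnePoint E) from hx, extEdist_infty_coe]
    exact hc.lt_top

theorem lowerSemicontinuous_extEdist [ProperSpace E] :
    LowerSemicontinuous fun p : OnePoint E × OnePoint E => extEdist p.1 p.2 := by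
  rintro ⟨x, y⟩ c hc
  cases x <;> cases y
  · exact absurd hc (by simp)
  · rw [nhds_prod_eq]
    exact eventually_lt_extEdist_infty_coe _ hc.ne_top
  · rw [nhds_prod_eq, Filter.prod_comm, eventually_map]
    simpa only [Prod.fst_swap, Prod.snd_swap, extEdist_comm]
      using eventually_lt_extEdist_infty_coe _ hc.ne_top
  · rw [nhds_prod_eq, nhds_coe_eq, nhds_coe_eq, Filter.prod_map_map_eq, eventually_map,
      ← nhds_prod_eq]
    exact (isOpen_lt continuous_const continuous_edist).mem_nhds hc

end OnePoint

theorem ENNReal.truncateToReal_le_add {t x y z : ℝ≥0∞} (ht : t ≠ ⊤) (h : x ≤ y + z) :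
    ENNReal.truncateToReal t x ≤ ENNReal.truncateToReal t y + ENNReal.truncateToReal t z := by
  have hmin : min t x ≤ min t y + min t z := by
    rcases le_total t y with hty | hty
    · exact (min_le_left _ _).trans ((min_eq_left hty).ge.trans le_self_add)
    rcases le_total t z with htz | htz
    · exact (min_le_left _ _).trans ((min_eq_left htz).ge.trans le_add_self)
    rw [min_eq_right hty, min_eq_right htz]
    exact (min_le_right _ _).trans h
  unfold ENNReal.truncateToReal
  rw [← ENNReal.toReal_add (by simp [ht]) (by simp [ht])]
  exact ENNReal.toReal_mono (by simp [ht]) hmin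

namespace TopometricOn

variable {Z : Type*} [TopologicalSpace Z]

theorem t2Space (S : TopometricOn Z) : T2Space Z := by
  rw [t2_iff_isClosed_diagonal]
  convert LowerSemicontinuous.isClosed_preimage S.lsc 0
  ext p
  simp only [mem_diagonal_iff, mem_preimage, mem_Iic, nonpos_iff_eq_zero]
  exact ⟨fun h => h ▸ S.d_self p.1, S.eq_of_d_eq_zero _ _⟩

section PointSetDistance

variable (S : TopometricOn Z) {z w y : Z} {A B F : Set Z}

theorem ptD_le (hy : y ∈ F) : S.ptD z F ≤ S.d z y := iInf₂_le y hy

theorem ptD_eq_zero (hz : z ∈ F) : S.ptD z F = 0 :=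
  nonpos_iff_eq_zero.1 ((S.ptD_le hz).trans_eq (S.d_self z))

theorem ptD_singleton (z x : Z) : S.ptD z {x} = S.d z x := by simp [ptD]

theorem setD_singleton (x : Z) (B : Set Z) : S.setD {x} B = S.ptD x B := by simp [setD, ptD]

theorem ptD_le_add (z w : Z) (F : Set Z) : S.ptD z F ≤ S.d z w + S.ptD w F := by
  simp only [ptD, ENNReal.add_iInf]
  exact le_iInf₂ fun y hy => (iInf₂_le y hy).trans (S.d_triangle z w y)

theorem exists_d_lt_of_ptD_lt {c : ℝ≥0∞} (h : S.ptD z F < c) : ∃ y ∈ F, S.d z y < c := by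
  simpa [ptD, iInf_lt_iff] using h

theorem le_ptD_add_ptD {r : ℝ≥0∞} (h : r ≤ S.setD A B) (z : Z) :
    r ≤ S.ptD z A + S.ptD z B :=
  ENNReal.le_iInf₂_add_iInf₂ fun a ha b hb =>
    calc r ≤ S.d a b := h.trans (iInf₂_le_of_le a ha (iInf₂_le b hb))
      _ ≤ S.d z a + S.d z b := S.d_symm z a ▸ S.d_triangle a z b

theorem lowerSemicontinuous_ptD [CompactSpace Z] (hF : IsClosed F) :
    LowerSemicontinuous fun z => S.ptD z F := by
  intro z c hc
  obtain ⟨c', hcc', hc'⟩ := exists_between hc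
  have hnear : ∀ᶠ x in 𝓝 z, ∀ y ∈ F, c' < S.d x y :=
    hF.isCompact.eventually_forall_of_forall_eventually fun y hy =>
      S.lsc (z, y) c' (hc'.trans_le (S.ptD_le hy))
  filter_upwards [hnear] with x hx
  exact hcc'.trans_le (le_iInf₂ fun y hy => (hx y hy).le)

end PointSetDistance

section Thickening

variable (S : TopometricOn Z)

def cthickening (r : ℝ) (A : Set Z) : Set Z := {z | S.ptD z A ≤ ENNReal.ofReal r}

theorem isClosed_cthickening [CompactSpace Z] {A : Set Z} (hA : IsClosed A) (r : ℝ) :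
    IsClosed (S.cthickening r A) :=
  (S.lowerSemicontinuous_ptD hA).isClosed_preimage _

theorem self_subset_cthickening (r : ℝ) (A : Set Z) : A ⊆ S.cthickening r A := fun _ hz => by
  simp [cthickening, S.ptD_eq_zero hz]

theorem ofReal_lt_d_of_notMem_cthickening {r : ℝ} {A : Set Z} {z v : Z}
    (hz : z ∉ S.cthickening r A) (hv : v ∈ A) : ENNReal.ofReal r < S.d z v :=
  (not_le.1 hz).trans_le (S.ptD_le hv)

end Thickening

section TruncatedDistance

variable (S : TopometricOn Z)

noncomputable def tdist (s : ℝ) (a b : Z) : ℝ :=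
  ENNReal.truncateToReal (ENNReal.ofReal s) (S.d a b)

variable {s : ℝ}

theorem tdist_nonneg (a b : Z) : 0 ≤ S.tdist s a b := ENNReal.truncateToReal_nonneg

theorem tdist_self (a : Z) : S.tdist s a a = 0 := by simp [tdist, ENNReal.truncateToReal, S.d_self]

theorem tdist_comm (a b : Z) : S.tdist s a b = S.tdist s b a := by rw [tdist, tdist, S.d_symm]

theorem tdist_triangle (a b c : Z) : S.tdist s a c ≤ S.tdist s a b + S.tdist s b c :=
  ENNReal.truncateToReal_le_add ENNReal.ofReal_ne_top (S.d_triangle a b c)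

theorem lowerSemicontinuous_tdist :
    LowerSemicontinuous fun p : Z × Z => S.tdist s p.1 p.2 :=
  (ENNReal.continuous_truncateToReal ENNReal.ofReal_ne_top).comp_lowerSemicontinuous S.lsc
    (ENNReal.monotone_truncateToReal ENNReal.ofReal_ne_top)

theorem le_tdist {r : ℝ} {a b : Z} (hr : ENNReal.ofReal r ≤ S.d a b) (hrs : r ≤ s) :
    r ≤ S.tdist s a b := by
  rw [tdist, ENNReal.truncateToReal, ← ENNReal.ofReal_le_iff_le_toReal (by simp)]
  exact le_min (ENNReal.ofReal_le_ofReal hrs) hr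

theorem tdist_le {c : ℝ} {a b : Z} (hc : 0 ≤ c) (h : S.d a b ≤ ENNReal.ofReal c) :
    S.tdist s a b ≤ c :=
  ENNReal.toReal_le_of_le_ofReal hc ((min_le_right _ _).trans h)

theorem edist_le_d_of_abs_le_tdist {x y : ℝ} {a b : Z} (h : |x - y| ≤ S.tdist s a b) :
    edist x y ≤ S.d a b := by
  rw [edist_dist, Real.dist_eq]
  exact (ENNReal.ofReal_le_of_le_toReal h).trans (min_le_right _ _)

end TruncatedDistance

section SupConvolution

variable (S : TopometricOn Z) (s : ℝ)

noncomputable def supConv (g : Z → ℝ) (z : Z) : ℝ := ⨆ w, g w - S.tdist s z w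

variable {S s} {g : Z → ℝ} {M : ℝ}

theorem bddAbove_range_sub_tdist (hM : ∀ w, g w ≤ M) (z : Z) :
    BddAbove (range fun w => g w - S.tdist s z w) :=
  ⟨M, forall_mem_range.2 fun w => by linarith [hM w, S.tdist_nonneg (s := s) z w]⟩

theorem le_supConv (hM : ∀ w, g w ≤ M) (z : Z) : g z ≤ S.supConv s g z := by
  simpa [supConv, S.tdist_self] using le_ciSup (bddAbove_range_sub_tdist (S := S) (s := s) hM z) z

theorem supConv_le {z : Z} {c : ℝ} (h : ∀ w, g w ≤ g z + S.tdist s z w + c) :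
    S.supConv s g z ≤ g z + c :=
  have : Nonempty Z := ⟨z⟩
  ciSup_le fun w => by linarith [h w]

theorem supConv_le_add (hM : ∀ w, g w ≤ M) (z z' : Z) :
    S.supConv s g z ≤ S.supConv s g z' + S.tdist s z z' := by
  have : Nonempty Z := ⟨z⟩
  unfold supConv
  exact ciSup_le fun w => by
    linarith [le_ciSup (bddAbove_range_sub_tdist (S := S) (s := s) hM z') w,
      S.tdist_triangle (s := s) z' z w, S.tdist_comm (s := s) z z']

theorem abs_supConv_sub_le (hM : ∀ w, g w ≤ M) (z z' : Z) :
    |S.supConv s g z - S.supConv s g z'| ≤ S.tdist s z z' :=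
  abs_sub_le_iff.2 ⟨by linarith [supConv_le_add (S := S) (s := s) hM z z'],
    by linarith [supConv_le_add (S := S) (s := s) hM z' z, S.tdist_comm (s := s) z z']⟩

theorem upperSemicontinuous_supConv [CompactSpace Z] (hg : UpperSemicontinuous g)
    (hM : ∀ w, g w ≤ M) : UpperSemicontinuous (S.supConv s g) := by
  have hneg : UpperSemicontinuous fun p : Z × Z => -S.tdist s p.1 p.2 :=
    continuous_neg.comp_lowerSemicontinuous_antitone S.lowerSemicontinuous_tdist
      fun _ _ => neg_le_neg
  have hF : UpperSemicontinuous fun p : Z × Z => g p.2 - S.tdist s p.1 p.2 := by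
    simp_rw [sub_eq_add_neg]
    exact (hg.comp continuous_snd).add hneg
  exact upperSemicontinuous_ciSup hF (bddAbove_range_sub_tdist hM)

end SupConvolution

section LipSandwich

variable {S : TopometricOn Z} {s : ℝ}

/-- Lipschitz bounds are taken for the distance truncated at `s`; for functions with values in
`[0, s]` this is the same as being `1`-Lipschitz for `S.d`. -/
structure IsLipSandwich (S : TopometricOn Z) (s : ℝ) (u ℓ : Z → ℝ) : Prop where
  usc : UpperSemicontinuous u
  lsc : LowerSemicontinuous ℓ
  le : ∀ z, u z ≤ ℓ z
  nonneg : ∀ z, 0 ≤ u z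
  le_bound : ∀ z, ℓ z ≤ s
  lip : ∀ a b, u a ≤ u b + S.tdist s a b

theorem le_add_of_mem_cthickening {u : Z → ℝ} (hu : ∀ a b, u a ≤ u b + S.tdist s a b)
    {A : Set Z} {m r : ℝ} (hm : ∀ v ∈ A, u v ≤ m) (hr : 0 ≤ r) {z : Z}
    (hz : z ∈ S.cthickening r A) : u z ≤ m + r := by
  refine le_of_forall_pos_le_add fun ε hε => ?_
  have hlt : S.ptD z A < ENNReal.ofReal (r + ε) :=
    hz.trans_lt ((ENNReal.ofReal_lt_ofReal_iff (by linarith)).2 (by linarith))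
  obtain ⟨v, hv, hzv⟩ := S.exists_d_lt_of_ptD_lt hlt
  have := S.tdist_le (s := s) (by linarith) hzv.le
  linarith [hu z v, hm v hv]

theorem IsLipSandwich.exists_chain [CompactSpace Z] {u ℓ : Z → ℝ} (h : S.IsLipSandwich s u ℓ)
    {γ : ℝ} (hγ : 0 < γ) (K : ℕ) :
    ∃ V : ℕ → Set Z, ∀ k ≤ K, IsOpen (V k) ∧ {z | ℓ z ≤ k * γ} ⊆ V k ∧
      closure (V k) ⊆ {z | u z < (k + 1) * γ} ∧
      ∀ i < k, S.cthickening ((k - i - 1) * γ) (closure (V i)) ⊆ V k := by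
  have := S.t2Space
  have hsub (k : ℕ) : {z | ℓ z ≤ k * γ} ⊆ {z | u z < (k + 1) * γ} := fun z hz => by
    change u z < (k + 1) * γ
    linarith [h.le z, hz.out]
  induction K with
  | zero =>
    obtain ⟨V₀, hV₀, hℓV₀, hV₀u⟩ := normal_exists_closure_subset (h.lsc.isClosed_preimage _)
      (h.usc.isOpen_preimage _) (hsub 0)
    refine ⟨fun _ => V₀, fun k hk => ?_⟩
    obtain rfl := Nat.le_zero.1 hk
    exact ⟨hV₀, hℓV₀, hV₀u, fun i hi => absurd hi (Nat.not_lt_zero i)⟩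
  | succ K ih =>
    obtain ⟨V, hV⟩ := ih
    set D : Set Z := {z | ℓ z ≤ (K + 1 : ℕ) * γ} ∪
      ⋃ i ∈ Iio (K + 1), S.cthickening (((K + 1 : ℕ) - i - 1) * γ) (closure (V i))
    have hDc : IsClosed D :=
      (h.lsc.isClosed_preimage _).union ((finite_Iio _).isClosed_biUnion fun i _ =>
        S.isClosed_cthickening isClosed_closure _)
    have hDu : D ⊆ {z | u z < ((K + 1 : ℕ) + 1) * γ} := by
      rintro z (hz | hz)
      · exact hsub _ hz
      obtain ⟨i, hi, hz⟩ := mem_iUnion₂.1 hz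
      have hiK : i ≤ K := Nat.lt_succ_iff.1 hi
      have : (i : ℝ) ≤ K := by exact_mod_cast hiK
      have := le_add_of_mem_cthickening h.lip (fun v hv => ((hV i hiK).2.2.1 hv).le)
        (by push_cast; nlinarith) hz
      change u z < _
      push_cast at this ⊢
      nlinarith
    obtain ⟨V', hV', hDV', hV'u⟩ :=
      normal_exists_closure_subset hDc (h.usc.isOpen_preimage _) hDu
    refine ⟨update V (K + 1) V', fun k hk => ?_⟩
    rcases Nat.of_le_succ hk with hk | rfl
    · rw [update_of_ne (by omega)]
      obtain ⟨h1, h2, h3, h4⟩ := hV k hk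
      exact ⟨h1, h2, h3, fun i hi => by rw [update_of_ne (by omega)]; exact h4 i hi⟩
    · rw [update_self]
      refine ⟨hV', fun z hz => hDV' (Or.inl hz), hV'u, fun i hi => ?_⟩
      rw [update_of_ne (by omega)]
      exact fun z hz => hDV' (Or.inr (mem_iUnion₂.2 ⟨i, hi, hz⟩))

variable {V : ℕ → Set Z} {γ : ℝ} {K : ℕ}

theorem firstIndex_le_firstIndex_closure_add_one
    (hV : ∀ k ≤ K, ∀ i < k, S.cthickening ((k - i - 1) * γ) (closure (V i)) ⊆ V k)
    (hVK : ∀ z, z ∈ V K) (z : Z) :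
    firstIndex V z ≤ firstIndex (fun k => closure (V k)) z + 1 := by
  set b := firstIndex (fun k => closure (V k)) z
  have hb : z ∈ closure (V b) :=
    mem_firstIndex (V := fun k => closure (V k)) (subset_closure (hVK z))
  rcases lt_or_ge b K with hbK | hbK
  · exact firstIndex_le
      (hV (b + 1) hbK b (Nat.lt_succ_self b) (S.self_subset_cthickening _ _ hb))
  · exact (firstIndex_le (hVK z)).trans (hbK.trans (Nat.le_succ b))

theorem firstIndex_le_add_tdist
    (hV : ∀ k ≤ K, ∀ i < k, S.cthickening ((k - i - 1) * γ) (closure (V i)) ⊆ V k)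
    (hVK : ∀ z, z ∈ V K) (hK : ((K : ℝ) - 2) * γ ≤ s) (hγ : 0 < γ) (z w : Z) :
    γ * firstIndex V w ≤ γ * firstIndex V z + S.tdist s z w + 2 * γ := by
  set a := firstIndex V
  have haK : (a w : ℝ) ≤ K := by exact_mod_cast firstIndex_le (hVK w)
  by_cases hfar : a z + 2 < a w
  · set m := a w - 1
    have hm : (m : ℝ) = a w - 1 := by rw [Nat.cast_sub (by omega), Nat.cast_one]
    have hw : w ∉ S.cthickening ((m - a z - 1) * γ) (closure (V (a z))) := fun hw =>
      notMem_of_lt_firstIndex (show m < a w by omega)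
        (hV m (by exact_mod_cast (show (m : ℝ) ≤ K by linarith)) (a z) (by omega) hw)
    have hr := S.le_tdist (s := s)
      (S.ofReal_lt_d_of_notMem_cthickening hw (subset_closure (mem_firstIndex (hVK z)))).le
      (by nlinarith)
    rw [S.tdist_comm, hm] at hr
    nlinarith
  · have : (a w : ℝ) ≤ a z + 2 := by exact_mod_cast not_lt.1 hfar
    nlinarith [S.tdist_nonneg (s := s) z w]

theorem IsLipSandwich.exists_staircase [CompactSpace Z] {u ℓ : Z → ℝ}
    (h : S.IsLipSandwich s u ℓ) {γ : ℝ} (hγ : 0 < γ) :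
    ∃ g g' : Z → ℝ, UpperSemicontinuous g ∧ LowerSemicontinuous g' ∧ (∀ z, g z ≤ g' z) ∧
      (∀ z, g' z ≤ g z + γ) ∧ (∀ z, 0 ≤ g z) ∧ (∀ z, u z - γ ≤ g z) ∧
      (∀ z, g z ≤ ℓ z + γ) ∧ ∀ z w, g w ≤ g z + S.tdist s z w + 2 * γ := by
  set K := ⌈s / γ⌉₊
  have hsK : s ≤ K * γ := (div_le_iff₀ hγ).1 (Nat.le_ceil _)
  have hKs (z : Z) : ((K : ℝ) - 2) * γ ≤ s := by
    have hs : 0 ≤ s := (h.nonneg z).trans ((h.le z).trans (h.le_bound z))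
    have := mul_lt_mul_of_pos_right (Nat.ceil_lt_add_one (div_nonneg hs hγ.le)) hγ
    rw [add_mul, div_mul_cancel₀ _ hγ.ne', one_mul] at this
    nlinarith
  obtain ⟨V, hV⟩ := h.exists_chain hγ K
  have hVK (z : Z) : z ∈ V K := (hV K le_rfl).2.1 ((h.le_bound z).trans hsK)
  have hcth := fun k hk => (hV k hk).2.2.2
  set a := firstIndex V
  set b := firstIndex fun k => closure (V k)
  have hba (z : Z) : (b z : ℝ) ≤ a z := by
    exact_mod_cast firstIndex_le (subset_closure (mem_firstIndex (hVK z)))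
  have hab (z : Z) : (a z : ℝ) ≤ b z + 1 := by
    exact_mod_cast firstIndex_le_firstIndex_closure_add_one hcth hVK z
  refine ⟨fun z => γ * a z, fun z => γ * (b z + 1), ?_, ?_, fun z => ?_, fun z => ?_,
    fun z => by positivity, fun z => ?_, fun z => ?_,
    fun z w => firstIndex_le_add_tdist hcth hVK (hKs z) hγ z w⟩
  · have hmono : Monotone fun n : ℕ => γ * n := fun m n hmn =>
      mul_le_mul_of_nonneg_left (Nat.cast_le.2 hmn) hγ.le
    exact continuous_of_discreteTopology.comp_upperSemicontinuous (g := fun n : ℕ => γ * n)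
      (upperSemicontinuous_firstIndex (fun k hk => (hV k hk).1) hVK) hmono
  · have hmono : Monotone fun n : ℕ => γ * (n + 1) := fun m n hmn =>
      mul_le_mul_of_nonneg_left (add_le_add_left (Nat.cast_le.2 hmn) 1) hγ.le
    exact continuous_of_discreteTopology.comp_lowerSemicontinuous (g := fun n : ℕ => γ * (n + 1))
      (lowerSemicontinuous_firstIndex (fun k _ => isClosed_closure) (subset_closure <| hVK ·))
      hmono
  · exact mul_le_mul_of_nonneg_left (hab z) hγ.le
  · nlinarith [hba z]
  · have : u z < (a z + 1) * γ :=
      (hV (a z) (firstIndex_le (hVK z))).2.2.1 (subset_closure (mem_firstIndex (hVK z)))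
    linarith
  · have hk₀K : ⌈ℓ z / γ⌉₊ ≤ K :=
      Nat.ceil_mono (div_le_div_of_nonneg_right (h.le_bound z) hγ.le)
    have hak₀ : a z ≤ ⌈ℓ z / γ⌉₊ :=
      firstIndex_le ((hV _ hk₀K).2.1 ((div_le_iff₀ hγ).1 (Nat.le_ceil _)))
    have : (a z : ℝ) < ℓ z / γ + 1 := (Nat.cast_le.2 hak₀).trans_lt
      (Nat.ceil_lt_add_one (div_nonneg ((h.nonneg z).trans (h.le z)) hγ.le))
    have := mul_lt_mul_of_pos_left this hγ
    rw [mul_add, mul_div_cancel₀ _ hγ.ne', mul_one] at this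
    exact this.le

theorem IsLipSandwich.exists_refinement [CompactSpace Z] {u ℓ : Z → ℝ}
    (h : S.IsLipSandwich s u ℓ) {γ : ℝ} (hγ : 0 < γ) :
    ∃ u₁ ℓ₁ : Z → ℝ, S.IsLipSandwich s u₁ ℓ₁ ∧ (∀ z, u z - 3 * γ ≤ u₁ z) ∧
      (∀ z, ℓ₁ z ≤ ℓ z + 2 * γ) ∧ ∀ z, ℓ₁ z ≤ u₁ z + 3 * γ := by
  rcases isEmpty_or_nonempty Z with hZ | ⟨⟨z₀⟩⟩
  · exact ⟨u, ℓ, h, fun z => isEmptyElim z, fun z => isEmptyElim z, fun z => isEmptyElim z⟩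
  have hs : 0 ≤ s := (h.nonneg z₀).trans ((h.le z₀).trans (h.le_bound z₀))
  obtain ⟨g, g', hg, hg', hgg', hg'g, hg0, hug, hgℓ, hdefect⟩ := h.exists_staircase hγ
  have hgM (w : Z) : g w ≤ s + γ := (hgℓ w).trans (by linarith [h.le_bound w])
  set v := S.supConv s g
  have hgv (z : Z) : g z ≤ v z := le_supConv hgM z
  have hvg (z : Z) : v z ≤ g z + 2 * γ := supConv_le fun w => hdefect z w
  -- clamping to `[0, s]` restores the bounds of a sandwich
  set c : ℝ → ℝ := fun x => projIcc 0 s hs x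
  have hc : Continuous c := continuous_subtype_val.comp continuous_projIcc
  have hcm : Monotone c := fun _ _ hxy => monotone_projIcc hs hxy
  have hclip (x y : ℝ) : |c x - c y| ≤ |x - y| := abs_projIcc_sub_projIcc hs
  refine ⟨fun z => c (v z - 2 * γ), fun z => c (g' z), ⟨?_, ?_, ?_, ?_, ?_, ?_⟩, ?_, ?_, ?_⟩
  · exact (hc.comp (continuous_sub_right _)).comp_upperSemicontinuous
      (upperSemicontinuous_supConv hg hgM) (hcm.comp fun _ _ hxy => sub_le_sub_right hxy _)
  · exact hc.comp_lowerSemicontinuous hg' hcm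
  · exact fun z => hcm (by linarith [hvg z, hgg' z])
  · exact fun z => (projIcc 0 s hs _).2.1
  · exact fun z => (projIcc 0 s hs _).2.2
  · intro a b
    have := (hclip (v a - 2 * γ) (v b - 2 * γ)).trans_eq (by rw [sub_sub_sub_cancel_right])
      |>.trans (abs_supConv_sub_le (S := S) (s := s) hgM a b)
    linarith [le_abs_self (c (v a - 2 * γ) - c (v b - 2 * γ))]
  · intro z
    show u z - 3 * γ ≤ max 0 (min s (v z - 2 * γ))
    exact le_max_of_le_right (le_min (by linarith [h.le z, h.le_bound z])
      (by linarith [hug z, hgv z]))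
  · intro z
    have : c (g' z) ≤ g' z := max_le ((hg0 z).trans (hgg' z)) (min_le_right _ _)
    linarith [hg'g z, hgℓ z]
  · intro z
    have hgv' : |g' z - (v z - 2 * γ)| ≤ 3 * γ :=
      abs_le.2 ⟨by linarith [hgg' z, hvg z], by linarith [hg'g z, hgv z]⟩
    linarith [le_abs_self (c (g' z) - c (v z - 2 * γ)), hclip (g' z) (v z - 2 * γ)]

theorem IsLipSandwich.exists_seq [CompactSpace Z] {u ℓ : Z → ℝ} (h : S.IsLipSandwich s u ℓ)
    {γ : ℕ → ℝ} (hγ : ∀ n, 0 < γ n) :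
    ∃ U L : ℕ → Z → ℝ, U 0 = u ∧ L 0 = ℓ ∧ (∀ n, S.IsLipSandwich s (U n) (L n)) ∧
      ∀ n z, U n z - 3 * γ n ≤ U (n + 1) z ∧ L (n + 1) z ≤ L n z + 2 * γ n ∧
        L (n + 1) z ≤ U (n + 1) z + 3 * γ n := by
  have hstep (n : ℕ) (p : (Z → ℝ) × (Z → ℝ)) : ∃ q : (Z → ℝ) × (Z → ℝ),
      S.IsLipSandwich s p.1 p.2 → S.IsLipSandwich s q.1 q.2 ∧
        ∀ z, p.1 z - 3 * γ n ≤ q.1 z ∧ q.2 z ≤ p.2 z + 2 * γ n ∧ q.2 z ≤ q.1 z + 3 * γ n := by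
    by_cases hp : S.IsLipSandwich s p.1 p.2
    · obtain ⟨u₁, ℓ₁, h₁, hu₁, hℓ₁, hgap⟩ := hp.exists_refinement (hγ n)
      exact ⟨(u₁, ℓ₁), fun _ => ⟨h₁, fun z => ⟨hu₁ z, hℓ₁ z, hgap z⟩⟩⟩
    · exact ⟨p, fun h => absurd h hp⟩
  choose next hnext using hstep
  set p : ℕ → (Z → ℝ) × (Z → ℝ) := fun n => Nat.rec (u, ℓ) (fun n q => next n q) n
  have hp (n : ℕ) : S.IsLipSandwich s (p n).1 (p n).2 := by
    induction n with
    | zero => exact h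
    | succ n ih => exact (hnext n (p n) ih).1
  exact ⟨fun n => (p n).1, fun n => (p n).2, rfl, rfl, hp, fun n => (hnext n (p n) (hp n)).2⟩

theorem IsLipSandwich.exists_continuous_between [CompactSpace Z] {u ℓ : Z → ℝ}
    (h : S.IsLipSandwich s u ℓ) {ε : ℝ} (hε : 0 < ε) :
    ∃ f : Z → ℝ, Continuous f ∧ (∀ a b, f a ≤ f b + S.tdist s a b) ∧
      (∀ z, u z - ε ≤ f z) ∧ ∀ z, f z ≤ ℓ z + ε := by
  set γ : ℕ → ℝ := fun n => ε / 6 * (1 / 2) ^ n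
  have hγ (n : ℕ) : 0 < γ n := by positivity
  have hγ_succ (n : ℕ) : γ (n + 1) = γ n / 2 := by simp only [γ, pow_succ]; ring
  obtain ⟨U, L, rfl, rfl, hUL, hstep⟩ := h.exists_seq hγ
  -- shifting by multiples of `γ n` makes the lower bounds increase and the upper bounds decrease
  set lo : ℕ → Z → ℝ := fun n z => U n z - 6 * γ n
  set hi : ℕ → Z → ℝ := fun n z => L n z + 4 * γ n
  have hlo_mono (z : Z) : Monotone fun n => lo n z := monotone_nat_of_le_succ fun n => by
    simp only [lo, hγ_succ]
    linarith [(hstep n z).1]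
  have hhi_anti (z : Z) : Antitone fun n => hi n z := antitone_nat_of_succ_le fun n => by
    simp only [hi, hγ_succ]
    linarith [(hstep n z).2.1]
  have hlo_hi (m n : ℕ) (z : Z) : lo m z ≤ hi n z :=
    calc lo m z ≤ lo (max m n) z := hlo_mono z (le_max_left m n)
      _ ≤ hi (max m n) z := by linarith [(hUL (max m n)).le z, hγ (max m n)]
      _ ≤ hi n z := hhi_anti z (le_max_right m n)
  set f : Z → ℝ := fun z => ⨆ n, lo n z
  have hlo_f (n : ℕ) (z : Z) : lo n z ≤ f z :=
    le_ciSup ⟨hi 0 z, forall_mem_range.2 fun m => hlo_hi m 0 z⟩ n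
  have hf_hi (n : ℕ) (z : Z) : f z ≤ hi n z := ciSup_le fun m => hlo_hi m n z
  refine ⟨f, continuous_of_forall_usc_le_le_lsc fun δ hδ => ?_, fun a b => ?_,
    fun z => ?_, fun z => ?_⟩
  · obtain ⟨n, hn⟩ := exists_pow_lt_of_lt_one (show 0 < δ / (8 * (ε / 6)) by positivity)
      (show (1 / 2 : ℝ) < 1 by norm_num)
    have hγn : 8 * γ n < δ := by
      show 8 * (ε / 6 * (1 / 2) ^ n) < δ
      rw [lt_div_iff₀ (by positivity)] at hn
      linarith
    refine ⟨lo (n + 1), hi (n + 1), ?_, ?_, hlo_f (n + 1), hf_hi (n + 1), fun z => ?_⟩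
    · exact (continuous_sub_right _).comp_upperSemicontinuous (hUL (n + 1)).usc
        fun _ _ hxy => sub_le_sub_right hxy _
    · exact (continuous_add_const _).comp_lowerSemicontinuous (hUL (n + 1)).lsc
        fun _ _ hxy => add_le_add_left hxy _
    · simp only [lo, hi, hγ_succ]
      linarith [(hstep n z).2.2]
  · exact ciSup_le fun n => (by linarith [(hUL n).lip a b, hlo_f n b] : lo n a ≤ f b + _)
  · have : U 0 z - 6 * (ε / 6 * (1 / 2) ^ 0) ≤ f z := hlo_f 0 z
    linarith
  · have : f z ≤ L 0 z + 4 * (ε / 6 * (1 / 2) ^ 0) := hf_hi 0 z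
    linarith

end LipSandwich

section CompactSpace

variable (S : TopometricOn Z) {s : ℝ}

theorem truncateToReal_ptD_le_add (F : Set Z) (z w : Z) :
    ENNReal.truncateToReal (ENNReal.ofReal s) (S.ptD z F) ≤
      ENNReal.truncateToReal (ENNReal.ofReal s) (S.ptD w F) + S.tdist s w z := by
  rw [add_comm, tdist, S.d_symm]
  exact ENNReal.truncateToReal_le_add ENNReal.ofReal_ne_top (S.ptD_le_add z w F)

theorem isLipSandwich_ptD [CompactSpace Z] {A B : Set Z} (hA : IsClosed A) (hB : IsClosed B)
    (hs : 0 ≤ s) (hAB : ENNReal.ofReal s ≤ S.setD A B) :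
    S.IsLipSandwich s (fun z => s - ENNReal.truncateToReal (ENNReal.ofReal s) (S.ptD z B))
      (fun z => ENNReal.truncateToReal (ENNReal.ofReal s) (S.ptD z A)) := by
  have htc := ENNReal.continuous_truncateToReal (ENNReal.ofReal_ne_top (r := s))
  have htm := ENNReal.monotone_truncateToReal (ENNReal.ofReal_ne_top (r := s))
  have hle (x : ℝ≥0∞) : ENNReal.truncateToReal (ENNReal.ofReal s) x ≤ s :=
    (ENNReal.truncateToReal_le ENNReal.ofReal_ne_top).trans_eq (ENNReal.toReal_ofReal hs)
  refine ⟨?_, htc.comp_lowerSemicontinuous (S.lowerSemicontinuous_ptD hA) htm, fun z => ?_,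
    fun z => sub_nonneg.2 (hle _), fun z => hle _, fun a b => ?_⟩
  · exact (continuous_sub_left s).comp_lowerSemicontinuous_antitone
      (htc.comp_lowerSemicontinuous (S.lowerSemicontinuous_ptD hB) htm)
      fun _ _ hxy => sub_le_sub_left hxy s
  · have hsum := ENNReal.truncateToReal_le_add (t := ENNReal.ofReal s) ENNReal.ofReal_ne_top
      (le_refl (S.ptD z A + S.ptD z B))
    rw [ENNReal.truncateToReal, min_eq_left (S.le_ptD_add_ptD hAB z),
      ENNReal.toReal_ofReal hs] at hsum
    linarith
  · have := S.truncateToReal_ptD_le_add (s := s) B b a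
    linarith

theorem exists_continuous_eqOn_zero_eqOn_of_ofReal_lt_setD [CompactSpace Z] {A B : Set Z}
    (hA : IsClosed A) (hB : IsClosed B) {r : ℝ} (hr : 0 ≤ r)
    (hAB : ENNReal.ofReal r < S.setD A B) :
    ∃ f : Z → ℂ, Continuous f ∧ (∀ a b, edist (f a) (f b) ≤ S.d a b) ∧
      EqOn f 0 A ∧ EqOn f (fun _ => r) B := by
  obtain ⟨s, hs, hrs, hsAB⟩ := ENNReal.lt_iff_exists_real_btwn.1 hAB
  have hrs : r < s := (ENNReal.ofReal_lt_ofReal_iff'.1 hrs).1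
  obtain ⟨f, hf, hflip, hlow, hup⟩ :=
    (S.isLipSandwich_ptD hA hB hs hsAB.le).exists_continuous_between (ε := (s - r) / 2)
      (by linarith)
  set g : Z → ℝ := fun z => projIcc 0 r hr (f z - (s - r) / 2)
  refine ⟨fun z => g z, Complex.continuous_ofReal.comp
    (continuous_subtype_val.comp (continuous_projIcc.comp (hf.sub continuous_const))),
    fun a b => ?_, fun z hz => ?_, fun z hz => ?_⟩
  · rw [Complex.isometry_ofReal.edist_eq]
    refine S.edist_le_d_of_abs_le_tdist (s := s) ((abs_projIcc_sub_projIcc hr).trans ?_)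
    rw [sub_sub_sub_cancel_right]
    exact abs_sub_le_iff.2
      ⟨by linarith [hflip a b], by linarith [hflip b a, S.tdist_comm (s := s) a b]⟩
  · have := hup z
    simp only [S.ptD_eq_zero hz, ENNReal.truncateToReal, min_zero, ENNReal.toReal_zero] at this
    simp [g, projIcc_of_le_left hr (show f z - (s - r) / 2 ≤ 0 by linarith)]
  · have := hlow z
    simp only [S.ptD_eq_zero hz, ENNReal.truncateToReal, min_zero, ENNReal.toReal_zero] at this
    simp [g, projIcc_of_right_le hr (show r ≤ f z - (s - r) / 2 by linarith)]

theorem isCompletelyRegular_of_compactSpace [CompactSpace Z] : S.IsCompletelyRegular := by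
  have := S.t2Space
  refine ⟨fun F hF x hx => ?_, fun x y => le_antisymm (le_of_forall_lt fun c hc => ?_)
    (iSup_le fun f => f.2.2 x y)⟩
  · obtain ⟨ε, hε, hball⟩ := S.refines Fᶜ hF.isOpen_compl x hx
    have hxF : 0 < S.setD {x} F := by
      rw [setD_singleton]
      exact hε.trans_le (le_iInf₂ fun y hy => not_lt.1 fun hxy => hball y hxy hy)
    obtain ⟨r, hr, hr0, hrF⟩ := ENNReal.lt_iff_exists_real_btwn.1 hxF
    obtain ⟨f, hf, hflip, hfx, hfF⟩ :=
      S.exists_continuous_eqOn_zero_eqOn_of_ofReal_lt_setD isClosed_singleton hF hr hrF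
    refine ⟨f, hf, hflip, r, fun y hy => hfF hy, ?_⟩
    rw [hfx rfl, Pi.zero_apply]
    exact_mod_cast (ENNReal.ofReal_pos.1 hr0).ne
  · obtain ⟨r, hr, hcr, hrxy⟩ := ENNReal.lt_iff_exists_real_btwn.1 hc
    obtain ⟨f, hf, hflip, hfx, hfy⟩ :=
      S.exists_continuous_eqOn_zero_eqOn_of_ofReal_lt_setD isClosed_singleton
        isClosed_singleton hr (by simpa [setD_singleton, ptD_singleton] using hrxy)
    refine hcr.trans_le (le_iSup_of_le ⟨f, hf, hflip⟩ ?_)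
    simp [hfx rfl, hfy rfl, edist_dist, Complex.dist_eq, le_abs_self]

end CompactSpace

section Compactification

variable {X : Type*} [TopologicalSpace X]

theorem injective_of_d_eq {T : TopometricOn X} {S : TopometricOn Z} {θ : X → Z}
    (hd : ∀ x y, S.d (θ x) (θ y) = T.d x y) : Injective θ := fun x y hxy =>
  T.eq_of_d_eq_zero x y (by rw [← hd, hxy, S.d_self])

theorem IsCompletelyRegular.of_isEmbedding {T : TopometricOn X} {S : TopometricOn Z}
    (hS : S.IsCompletelyRegular) {θ : X → Z} (hθ : IsEmbedding θ)
    (hd : ∀ x y, S.d (θ x) (θ y) = T.d x y) : T.IsCompletelyRegular := by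
  refine ⟨fun F hF x hx => ?_, fun x y => le_antisymm ?_ (iSup_le fun f => f.2.2 x y)⟩
  · have hθx : θ x ∉ closure (θ '' F) := fun h =>
      hx (hF.closure_eq ▸ (hθ.closure_eq_preimage_closure_image F ▸ h))
    obtain ⟨g, hg, hglip, t, hgt, hgx⟩ := hS.1 _ isClosed_closure (θ x) hθx
    exact ⟨g ∘ θ, hg.comp hθ.continuous, fun a b => hd a b ▸ hglip (θ a) (θ b), t,
      fun y hy => hgt (θ y) (subset_closure (mem_image_of_mem θ hy)), hgx⟩
  · rw [← hd, hS.2]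
    exact iSup_le fun g => le_iSup_of_le ⟨g.1 ∘ θ, g.2.1.comp hθ.continuous,
      fun a b => hd a b ▸ g.2.2 (θ a) (θ b)⟩ le_rfl

noncomputable def pi {ι : Type*} {Y : ι → Type*} [∀ i, TopologicalSpace (Y i)]
    (S : ∀ i, TopometricOn (Y i)) : TopometricOn (∀ i, Y i) where
  d z w := ⨆ i, (S i).d (z i) (w i)
  d_self z := by simp [d_self]
  eq_of_d_eq_zero z w h :=
    funext fun i => (S i).eq_of_d_eq_zero _ _ (ENNReal.iSup_eq_zero.1 h i)
  d_symm z w := by simp only [(S _).d_symm]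
  d_triangle x y z :=
    iSup_le fun i => ((S i).d_triangle _ (y i) _).trans (add_le_add (le_iSup_of_le i le_rfl)
      (le_iSup_of_le i le_rfl))
  lsc := lowerSemicontinuous_iSup fun i =>
    (S i).lsc.comp ((continuous_apply i).prodMap (continuous_apply i))
  refines U hU z hz := by
    obtain ⟨I, u, hu, hIU⟩ := isOpen_pi_iff.1 hU z hz
    have hε (i : ι) : ∃ ε > 0, i ∈ I → ∀ y, (S i).d (z i) y < ε → y ∈ u i := by
      by_cases hi : i ∈ I
      · obtain ⟨ε, hε, hball⟩ := (S i).refines _ (hu i hi).1 _ (hu i hi).2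
        exact ⟨ε, hε, fun _ => hball⟩
      · exact ⟨1, one_pos, fun h => absurd h hi⟩
    choose ε hε hball using hε
    refine ⟨I.inf ε, (Finset.lt_inf_iff ENNReal.zero_lt_top).2 fun i _ => hε i,
      fun w hw => hIU fun i hi => hball i hi (w i) ?_⟩
    exact (le_iSup_of_le i le_rfl).trans_lt (hw.trans_le (Finset.inf_le hi))

noncomputable def onePoint (E : Type*) [MetricSpace E] [ProperSpace E] :
    TopometricOn (OnePoint E) where
  d := OnePoint.extEdist
  d_self x := by cases x <;> simp
  eq_of_d_eq_zero x y h := by cases x <;> cases y <;> simp_all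
  d_symm := OnePoint.extEdist_comm
  d_triangle x y z := by cases x <;> cases y <;> cases z <;> simp [edist_triangle]
  lsc := OnePoint.lowerSemicontinuous_extEdist
  refines U hU x hx := by
    cases x with
    | infty => exact ⟨⊤, ENNReal.zero_lt_top, fun y hy => by cases y <;> simp_all⟩
    | coe a =>
      obtain ⟨ε, hε, hball⟩ := EMetric.isOpen_iff.1 (hU.preimage OnePoint.continuous_coe) a hx
      refine ⟨ε, hε, fun y hy => ?_⟩
      cases y with
      | infty => simp at hy
      | coe b => exact hball (by rwa [Metric.mem_eball, edist_comm])

variable {T : TopometricOn X}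

def lipEval (T : TopometricOn X) (x : X) :
    {f : X → ℂ // Continuous f ∧ ∀ a b, edist (f a) (f b) ≤ T.d a b} → OnePoint ℂ :=
  fun f => (f.1 x : OnePoint ℂ)

theorem IsCompletelyRegular.d_lipEval (hT : T.IsCompletelyRegular) (x y : X) :
    (pi fun _ => onePoint ℂ).d (T.lipEval x) (T.lipEval y) = T.d x y :=
  (hT.2 x y).symm

theorem IsCompletelyRegular.isEmbedding_lipEval (hT : T.IsCompletelyRegular) :
    IsEmbedding T.lipEval := by
  refine ⟨isInducing_pi_of_forall_isOpen (fun f => OnePoint.continuous_coe.comp f.2.1)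
    fun x U hU hx => ?_, injective_of_d_eq hT.d_lipEval⟩
  obtain ⟨f, hf, hflip, t, hft, hfx⟩ := hT.1 Uᶜ hU.isClosed_compl x (not_not_intro hx)
  refine ⟨⟨f, hf, hflip⟩, (↑) '' {t}ᶜ,
    OnePoint.isOpenEmbedding_coe.isOpenMap _ isOpen_compl_singleton, ⟨f x, hfx, rfl⟩, ?_⟩
  rintro y ⟨w, hwt, hwy⟩
  by_contra hy
  exact hwt (OnePoint.coe_injective hwy ▸ hft y hy)

end Compactification

end TopometricOn

/-- a topometric space admits a topometric compactification iff it is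
completely regular. -/
theorem compactification_iff_isCompletelyRegular {X : Type u} [TopologicalSpace X]
    (T : TopometricOn X) :
    (∃ (Z : Type u) (_ : TopologicalSpace Z) (_ : CompactSpace Z) (S : TopometricOn Z)
        (θ : X → Z), Topology.IsEmbedding θ ∧ ∀ x y : X, S.d (θ x) (θ y) = T.d x y) ↔
      T.IsCompletelyRegular := by
  constructor
  · rintro ⟨Z, _, _, S, θ, hθ, hd⟩
    exact S.isCompletelyRegular_of_compactSpace.of_isEmbedding hθ hd
  · intro hT
    exact ⟨_, _, inferInstance, _, T.lipEval, hT.isEmbedding_lipEval, hT.d_lipEval⟩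
end

section
/- Let (G, 𝒯) be a metrisable topological group with a left-invariant compatible distance d_L, and define d_u(f,g) = sup_h d_L(fh, gh). Then (G, 𝒯, d_u) is a completely regular topometric space: d_u is lower semi-continuous with respect to 𝒯, the d_u-topology refines 𝒯, and the continuous 1-Lipschitz functions (G, 𝒯, d_u) → ℂ separate points from closed sets and satisfy d_u(f,g) = sup over such functions θ of |θ(f) − θ(g)|. -/
open scoped ENNReal NNReal
open Set

/-!
The uniform distance is the supremum of the pseudometrics `(f, g) ↦ d_L(fh, gh)`, each of which
is continuous because right translation is. A supremum of continuous functions is lower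
semicontinuous, and the term `h = 1` gives `d_L ≤ d_u`, so `d_u` refines the topology. For the
complete regularity, composing a real 1-Lipschitz function for `d_L` with a right translation
`· * h` gives a continuous function which is 1-Lipschitz for `d_u`: `a ↦ min (d_L(x, a)) ε`
separates `x` from a closed set, and `a ↦ d_L(ah, xh)` witnesses `d_L(xh, yh)` in the supremum.
-/

section SupEdist

variable {X ι : Type*}

noncomputable def supEdist [EDist X] (φ : ι → X → X) (x y : X) : ℝ≥0∞ :=
  ⨆ i, edist (φ i x) (φ i y)

variable [PseudoMetricSpace X] {φ : ι → X → X}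

theorem edist_le_supEdist (φ : ι → X → X) (i : ι) (x y : X) :
    edist (φ i x) (φ i y) ≤ supEdist φ x y :=
  le_iSup (fun i => edist (φ i x) (φ i y)) i

theorem edist_le_supEdist_of_eq_id {i₀ : ι} (hi₀ : φ i₀ = id) (x y : X) :
    edist x y ≤ supEdist φ x y := by
  simpa [hi₀] using edist_le_supEdist φ i₀ x y

theorem supEdist_comm (x y : X) : supEdist φ x y = supEdist φ y x :=
  iSup_congr fun _ => edist_comm _ _

theorem supEdist_triangle (x y z : X) : supEdist φ x z ≤ supEdist φ x y + supEdist φ y z :=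
  iSup_le fun i => (edist_triangle _ (φ i y) _).trans <|
    add_le_add (edist_le_supEdist φ i x y) (edist_le_supEdist φ i y z)

theorem lowerSemicontinuous_supEdist (hφ : ∀ i, Continuous (φ i)) :
    LowerSemicontinuous fun p : X × X => supEdist φ p.1 p.2 :=
  lowerSemicontinuous_iSup fun i =>
    (continuous_edist.comp ((hφ i).prodMap (hφ i))).lowerSemicontinuous

theorem edist_ofReal_comp_le_supEdist {g : X → ℝ} (hg : LipschitzWith 1 g) (i : ι) (a b : X) :
    edist (g (φ i a) : ℂ) (g (φ i b) : ℂ) ≤ supEdist φ a b :=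
  calc edist (g (φ i a) : ℂ) (g (φ i b) : ℂ) = edist (g (φ i a)) (g (φ i b)) :=
        Complex.isometry_ofReal.edist_eq _ _
    _ ≤ edist (φ i a) (φ i b) := by simpa using hg (φ i a) (φ i b)
    _ ≤ supEdist φ a b := edist_le_supEdist φ i a b

end SupEdist

namespace TopometricOn

variable {X ι : Type*} [MetricSpace X]

noncomputable def ofSupEdist (φ : ι → X → X) (hφ : ∀ i, Continuous (φ i)) {i₀ : ι}
    (hi₀ : φ i₀ = id) : TopometricOn X where
  d := supEdist φ
  d_self x := by simp [supEdist]
  eq_of_d_eq_zero x y h :=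
    edist_eq_zero.1 (le_antisymm (h ▸ edist_le_supEdist_of_eq_id hi₀ x y) bot_le)
  d_symm := supEdist_comm
  d_triangle := supEdist_triangle
  lsc := lowerSemicontinuous_supEdist hφ
  refines U hU x hx := by
    obtain ⟨ε, hε, hball⟩ := EMetric.isOpen_iff.1 hU x hx
    refine ⟨ε, hε, fun y hy => hball ?_⟩
    rw [Metric.mem_eball, edist_comm]
    exact (edist_le_supEdist_of_eq_id hi₀ x y).trans_lt hy

theorem ofSupEdist_isCompletelyRegular (φ : ι → X → X) (hφ : ∀ i, Continuous (φ i)) {i₀ : ι}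
    (hi₀ : φ i₀ = id) : (ofSupEdist φ hφ hi₀).IsCompletelyRegular := by
  have hTest : ∀ {g : X → ℝ}, LipschitzWith 1 g → ∀ i,
      Continuous (fun a => (g (φ i a) : ℂ)) ∧
        ∀ a b, edist (g (φ i a) : ℂ) (g (φ i b) : ℂ) ≤ supEdist φ a b :=
    fun hg i => ⟨Complex.continuous_ofReal.comp (hg.continuous.comp (hφ i)),
      edist_ofReal_comp_le_supEdist hg i⟩
  refine ⟨fun F hF x hx => ?_, fun x y => le_antisymm ?_ (iSup_le fun f => f.2.2 x y)⟩
  · obtain ⟨ε, hε, hball⟩ := Metric.isOpen_iff.1 hF.isOpen_compl x hx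
    have hg : LipschitzWith 1 fun a => min (dist x a) ε := (LipschitzWith.dist_right x).min_const ε
    refine ⟨_, (hTest hg i₀).1, (hTest hg i₀).2, ε, fun y hy => ?_, ?_⟩
    · have hxy : ε ≤ dist x y := by
        by_contra! hlt
        exact hball (by rwa [Metric.mem_ball, dist_comm]) hy
      simp [hi₀, hxy]
    · simpa [hi₀] using hε
  · refine iSup_le fun i => ?_
    have hg : LipschitzWith 1 fun a => dist a (φ i x) := LipschitzWith.dist_left (φ i x)
    refine le_trans ?_ (le_iSup (fun f : {f : X → ℂ // Continuous f ∧
      ∀ a b, edist (f a) (f b) ≤ supEdist φ a b} => edist (f.1 x) (f.1 y)) ⟨_, hTest hg i⟩)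
    simp [edist_dist, dist_comm]

end TopometricOn

theorem group_uniform_distance_completelyRegular_general {G : Type*} [Group G]
    [TopologicalSpace G] [IsTopologicalGroup G] (dL : G → G → ℝ)
    (h_self : ∀ x : G, dL x x = 0)
    (h_eq : ∀ x y : G, dL x y = 0 → x = y)
    (h_symm : ∀ x y : G, dL x y = dL y x)
    (h_tri : ∀ x y z : G, dL x z ≤ dL x y + dL y z)
    (h_compat : ∀ U : Set G, IsOpen U ↔ ∀ x ∈ U, ∃ ε > (0 : ℝ), ∀ y, dL x y < ε → y ∈ U) :
    ∃ T : TopometricOn G,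
      (∀ f g : G, T.d f g = ⨆ h : G, ENNReal.ofReal (dL (f * h) (g * h))) ∧
      T.IsCompletelyRegular := by
  let _ : MetricSpace G := .ofDistTopology dL h_self h_symm h_tri h_compat h_eq
  have hφ : ∀ h : G, Continuous (· * h) := continuous_mul_const
  have hφ₁ : (· * (1 : G)) = id := funext mul_one
  exact ⟨.ofSupEdist _ hφ hφ₁, fun f g => iSup_congr fun h => edist_dist _ _,
    TopometricOn.ofSupEdist_isCompletelyRegular _ hφ hφ₁⟩

/-- a metrisable topological group with a left-invariant compatible
distance `dL`, equipped with the uniform distance `d_u(f,g) = sup_h dL (f*h) (g*h)`,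
is a completely regular topometric space. -/
theorem group_uniform_distance_completelyRegular {G : Type*} [Group G]
    [TopologicalSpace G] [IsTopologicalGroup G] (dL : G → G → ℝ)
    (h_self : ∀ x : G, dL x x = 0)
    (h_eq : ∀ x y : G, dL x y = 0 → x = y)
    (h_symm : ∀ x y : G, dL x y = dL y x)
    (h_tri : ∀ x y z : G, dL x z ≤ dL x y + dL y z)
    (h_inv : ∀ h x y : G, dL (h * x) (h * y) = dL x y)
    (h_compat : ∀ U : Set G, IsOpen U ↔ ∀ x ∈ U, ∃ ε > (0 : ℝ), ∀ y, dL x y < ε → y ∈ U) :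
    ∃ T : TopometricOn G,
      (∀ f g : G, T.d f g = ⨆ h : G, ENNReal.ofReal (dL (f * h) (g * h))) ∧
      T.IsCompletelyRegular :=
  group_uniform_distance_completelyRegular_general dL h_self h_eq h_symm h_tri h_compat
end

section
/- Let X be a completely regular topometric space satisfying: for every open U ⊆ X and r > 0, the metric closure of U is contained in the interior of B(U,r) = {x : d(x,U) < r}. Let X₀ ⊆ X be metrically dense. Then every continuous 1-Lipschitz function f : X₀ → ℂ extends to a continuous 1-Lipschitz function on X. -/
open scoped ENNReal NNReal
open Set

/-!
The distance `d` is a genuine extended metric, so the metric part is the classical extension of a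
Lipschitz map from a dense subset into a complete space, carried out in `X` retopologized by `d`.
For continuity at `x` in the topology `𝒯`: the points of `X₀` where `g` is `ε/2`-close to `g x`
are the trace on `X₀` of a `𝒯`-open set `U`, and `x` lies in the metric closure of `U` because
`X₀` is metrically dense and `g` is `1`-Lipschitz. Condition (∗∗) gives a `𝒯`-neighbourhood of
`x` within `d`-distance `ε/4` of `U`; since `U` is open and `X₀` metrically dense, each of its
points is within `ε/2` of a point of `X₀ ∩ U`, whence within `ε` of `g x` in value.
-/

theorem LipschitzWith.exists_extension_of_dense {α Y : Type*} [PseudoEMetricSpace α]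
    [EMetricSpace Y] [CompleteSpace Y] {s : Set α} (hs : Dense s) {K : ℝ≥0} {f : s → Y}
    (hf : LipschitzWith K f) : ∃ g : α → Y, LipschitzWith K g ∧ ∀ x : s, g x = f x := by
  have hval := isUniformInducing_val s
  set g := hs.isDenseInducing_val.extend f
  have hgf : ∀ x : s, g x = f x :=
    uniformly_extend_of_ind hval hs.denseRange_val hf.uniformContinuous
  have hg : Continuous g :=
    (uniformContinuous_uniformly_extend hval hs.denseRange_val hf.uniformContinuous).continuous
  have hgs : LipschitzOnWith K g s := fun x hx y hy => by
    rw [hgf ⟨x, hx⟩, hgf ⟨y, hy⟩]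
    exact hf ⟨x, hx⟩ ⟨y, hy⟩
  refine ⟨g, lipschitzOnWith_univ.1 ?_, hgf⟩
  simpa only [hs.closure_eq] using hgs.closure hg.continuousOn

namespace TopometricOn

variable {X : Type*} [TopologicalSpace X] (T : TopometricOn X)

theorem ptD_lt_iff {x : X} {F : Set X} {r : ℝ≥0∞} : T.ptD x F < r ↔ ∃ z ∈ F, T.d x z < r := by
  simp only [ptD, iInf_lt_iff, exists_prop]

theorem ptD_eq_zero_iff {x : X} {F : Set X} :
    T.ptD x F = 0 ↔ ∀ ε > 0, ∃ z ∈ F, T.d x z < ε := by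
  simp only [← T.ptD_lt_iff, ← nonpos_iff_eq_zero]
  exact forall_gt_iff_le.symm

theorem exists_mem_inter_d_lt_add {X₀ U : Set X} (hdense : ∀ x, T.ptD x X₀ = 0) (hU : IsOpen U)
    {y : X} {r s : ℝ≥0∞} (hy : T.ptD y U < r) (hs : 0 < s) :
    ∃ v ∈ X₀, v ∈ U ∧ T.d y v < r + s := by
  obtain ⟨u, huU, hyu⟩ := T.ptD_lt_iff.1 hy
  obtain ⟨η, hη, hball⟩ := T.refines U hU u huU
  obtain ⟨v, hvX₀, huv⟩ := T.ptD_eq_zero_iff.1 (hdense u) (min η s) (lt_min hη hs)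
  refine ⟨v, hvX₀, hball v (huv.trans_le (min_le_left _ _)), ?_⟩
  calc T.d y v ≤ T.d y u + T.d u v := T.d_triangle y u v
    _ < r + s := ENNReal.add_lt_add hyu (huv.trans_le (min_le_right _ _))

theorem continuous_of_continuousOn_of_metricallyDense {Y : Type*} [PseudoEMetricSpace Y]
    (hss : ∀ U : Set X, IsOpen U → ∀ r : ℝ≥0∞, 0 < r →
      {x | T.ptD x U = 0} ⊆ interior {x | T.ptD x U < r})
    {X₀ : Set X} (hdense : ∀ x, T.ptD x X₀ = 0) {g : X → Y}
    (hg : ∀ a b, edist (g a) (g b) ≤ T.d a b) (hgX₀ : ContinuousOn g X₀) : Continuous g := by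
  refine continuous_iff_continuousAt.2 fun x => EMetric.tendsto_nhds.2 fun ε hε => ?_
  have hε2 : 0 < ε / 2 := ENNReal.half_pos hε.ne'
  obtain ⟨U, hU, hUX₀⟩ := continuousOn_iff'.1 hgX₀ _ (Metric.isOpen_eball (x := g x) (ε := ε / 2))
  have hUX₀ : ∀ v ∈ X₀, v ∈ U ↔ edist (g v) (g x) < ε / 2 := fun v hv => by
    simpa [hv] using (Set.ext_iff.1 hUX₀ v).symm
  have hxU : T.ptD x U = 0 := T.ptD_eq_zero_iff.2 fun η hη => by
    obtain ⟨w, hwX₀, hxw⟩ := T.ptD_eq_zero_iff.1 (hdense x) (min η (ε / 2)) (lt_min hη hε2)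
    refine ⟨w, (hUX₀ w hwX₀).2 ?_, hxw.trans_le (min_le_left _ _)⟩
    rw [edist_comm]
    exact (hg x w).trans_lt (hxw.trans_le (min_le_right _ _))
  have hε4 : 0 < ε / 2 / 2 := ENNReal.half_pos hε2.ne'
  filter_upwards [mem_interior_iff_mem_nhds.1 (hss U hU _ hε4 hxU)] with y hy
  obtain ⟨v, hvX₀, hvU, hyv⟩ := T.exists_mem_inter_d_lt_add hdense hU hy hε4
  calc edist (g y) (g x) ≤ edist (g y) (g v) + edist (g v) (g x) := edist_triangle _ _ _
    _ < ε / 2 + ε / 2 := by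
      refine ENNReal.add_lt_add ((hg y v).trans_lt ?_) ((hUX₀ v hvX₀).1 hvU)
      rwa [ENNReal.add_halves] at hyv
    _ = ε := ENNReal.add_halves ε

/-- `X` with the topology of the metric `d` instead of `𝒯`. -/
def WithMetric (_T : TopometricOn X) : Type _ := X

noncomputable instance : EMetricSpace T.WithMetric where
  edist := T.d
  edist_self := T.d_self
  edist_comm := T.d_symm
  edist_triangle := T.d_triangle
  eq_of_edist_eq_zero := T.eq_of_d_eq_zero _ _

theorem exists_extension_of_metricallyDense {Y : Type*} [EMetricSpace Y] [CompleteSpace Y]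
    {X₀ : Set X} (hdense : ∀ x, T.ptD x X₀ = 0) {f : X₀ → Y}
    (hf : ∀ a b : X₀, edist (f a) (f b) ≤ T.d a b) :
    ∃ g : X → Y, (∀ a b, edist (g a) (g b) ≤ T.d a b) ∧ ∀ x : X₀, g x = f x := by
  have hX₀ : Dense (X := T.WithMetric) X₀ := fun x =>
    EMetric.mem_closure_iff.2 (T.ptD_eq_zero_iff.1 (hdense x))
  obtain ⟨g, hg, hgf⟩ := LipschitzWith.exists_extension_of_dense hX₀ (f := f) (K := 1)
    fun a b => by rw [ENNReal.coe_one, one_mul]; exact hf a b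
  refine ⟨g, fun a b => ?_, hgf⟩
  have hab := hg a b
  rwa [ENNReal.coe_one, one_mul] at hab

end TopometricOn

theorem extend_lipschitz_of_metrically_dense_general {X : Type*} [TopologicalSpace X]
    (T : TopometricOn X)
    (hss : ∀ U : Set X, IsOpen U → ∀ r : ℝ≥0∞, 0 < r →
      {x | T.ptD x U = 0} ⊆ interior {x | T.ptD x U < r})
    (X₀ : Set X) (hdense : ∀ x : X, T.ptD x X₀ = 0)
    (f : X₀ → ℂ) (hfc : Continuous f)
    (hfl : ∀ a b : X₀, edist (f a) (f b) ≤ T.d a b) :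
    ∃ g : X → ℂ, Continuous g ∧ (∀ a b : X, edist (g a) (g b) ≤ T.d a b) ∧
      ∀ x : X₀, g x = f x := by
  obtain ⟨g, hg, hgf⟩ := T.exists_extension_of_metricallyDense hdense hfl
  have hgX₀ : ContinuousOn g X₀ :=
    continuousOn_iff_continuous_domRestrict.2 (by convert hfc; exact funext hgf)
  exact ⟨g, T.continuous_of_continuousOn_of_metricallyDense hss hdense hg hgX₀, hg, hgf⟩

/-- in a completely regular topometric space satisfying condition (∗∗)
(the metric closure of any open `U` is contained in the interior of `B(U, r)`),
every continuous `1`-Lipschitz function on a metrically dense subset extends to a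
continuous `1`-Lipschitz function on the whole space. -/
theorem extend_lipschitz_of_metrically_dense {X : Type*} [TopologicalSpace X]
    (T : TopometricOn X) (hT : T.IsCompletelyRegular)
    (hss : ∀ U : Set X, IsOpen U → ∀ r : ℝ≥0∞, 0 < r →
      {x | T.ptD x U = 0} ⊆ interior {x | T.ptD x U < r})
    (X₀ : Set X) (hdense : ∀ x : X, T.ptD x X₀ = 0)
    (f : X₀ → ℂ) (hfc : Continuous f)
    (hfl : ∀ a b : X₀, edist (f a) (f b) ≤ T.d a b) :
    ∃ g : X → ℂ, Continuous g ∧ (∀ a b : X, edist (g a) (g b) ≤ T.d a b) ∧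
      ∀ x : X₀, g x = f x :=
  extend_lipschitz_of_metrically_dense_general T hss X₀ hdense f hfc hfl
end

section
/- Let X be a compact topological space and A ⊆ C(X, ℂ) an L(1)-set, i.e., A is convex, closed under multiplication by scalars α with |α| ≤ 1 and under taking pointwise absolute value, A separates points of X, A contains all constant functions, and whenever f ∉ A there exist x, y ∈ X and ε > 0 such that every g ∈ C(X) with |f(x)−g(x)| < ε and |f(y)−g(y)| < ε also satisfies g ∉ A. Define d(x,y) = sup_{f ∈ A} |f(x)−f(y)|. Then (X, d) is a topometric space (d is a lower semi-continuous metric refining the topology) and A equals exactly the set of continuous 1-Lipschitz functions X → ℂ with respect to d; moreover d is the unique such metric. -/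
open scoped ENNReal NNReal
open Set

/-!
The metric `d x y = ⨆ f ∈ A, ‖f x - f y‖` is lower semicontinuous, being a supremum of continuous
functions, and on a compact space a lower semicontinuous metric automatically refines the topology.
A continuous `f` that is `1`-Lipschitz for `d` lies in `A`: at two given points, an element of `A`
nearly realising `d x y`, rescaled and averaged with a constant, matches `f` up to any `ε`, so the
two-point closedness condition on `A` applies.

Uniqueness holds because on a compact topometric space `d x y` is the supremum of `‖f x - f y‖`
over continuous `1`-Lipschitz `f`. Such functions come from a metric Urysohn construction: open
sets `V q`, indexed by the rationals `q ∈ [0, 1]`, with `x₀ ∈ V 0`, `V 1 = {y₀}ᶜ`, and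
`m * (r - q) < d p w` whenever `p ∈ closure (V q)`, `w ∉ V r`, `q < r`. Each new set is squeezed,
by normality, between the closed `m * (r - q)`-thickenings of earlier closures and the open set of
points far from earlier complements (compactness makes them closed and open respectively), and
the triangle inequality shows that the first lies inside the second. Then
`z ↦ m * inf {q | z ∈ V q}` is continuous, `1`-Lipschitz, and separates `x₀` from `y₀` by `m`.
-/

open Filter Topology

section

variable {X : Type*} [TopologicalSpace X]

theorem exists_pos_forall_lt_mem_of_lowerSemicontinuous [CompactSpace X] {d : X → X → ℝ≥0∞}
    (hd : LowerSemicontinuous fun p : X × X => d p.1 p.2) (hd0 : ∀ x y, d x y = 0 → x = y)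
    {U : Set X} (hU : IsOpen U) {x : X} (hx : x ∈ U) :
    ∃ ε > (0 : ℝ≥0∞), ∀ y, d x y < ε → y ∈ U := by
  rcases (Uᶜ).eq_empty_or_nonempty with hempty | hne
  · exact ⟨1, one_pos, fun y _ => by simpa using eq_empty_iff_forall_notMem.1 hempty y⟩
  have hdx : LowerSemicontinuous (d x) := hd.comp (continuous_const.prodMk continuous_id)
  obtain ⟨y₁, hy₁, hmin⟩ := LowerSemicontinuousOn.exists_isMinOn hne
    hU.isClosed_compl.isCompact (hdx.lowerSemicontinuousOn _)
  refine ⟨d x y₁, pos_iff_ne_zero.2 fun h => hy₁ (hd0 x y₁ h ▸ hx), fun y hy => ?_⟩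
  by_contra hyU
  exact (isMinOn_iff.1 hmin y hyU).not_gt hy

-- `∅` when no such set exists, so that it is open unconditionally.
open Classical in
noncomputable def openBetween (K U : Set X) : Set X :=
  if h : ∃ W, IsOpen W ∧ K ⊆ W ∧ closure W ⊆ U then h.choose else ∅

theorem isOpen_openBetween (K U : Set X) : IsOpen (openBetween K U) := by
  unfold openBetween
  split_ifs with h
  exacts [h.choose_spec.1, isOpen_empty]

theorem openBetween_spec [NormalSpace X] {K U : Set X} (hK : IsClosed K) (hU : IsOpen U)
    (hKU : K ⊆ U) : K ⊆ openBetween K U ∧ closure (openBetween K U) ⊆ U := by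
  have h : ∃ W, IsOpen W ∧ K ⊆ W ∧ closure W ⊆ U := normal_exists_closure_subset hK hU hKU
  rw [openBetween, dif_pos h]
  exact h.choose_spec.2

end

-- Indices `0` and `1` are reserved for the levels of the two base sets; every rational of
-- `[0, 1]` occurs at some other index.
noncomputable def urysohnLevel : ℕ → ℝ
  | 0 => 0
  | 1 => 1
  | n + 2 => max 0 (min 1 ((Denumerable.eqv ℚ).symm n))

theorem urysohnLevel_nonneg : ∀ n, 0 ≤ urysohnLevel n
  | 0 => le_rfl
  | 1 => zero_le_one
  | _ + 2 => le_max_left _ _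

theorem urysohnLevel_le_one : ∀ n, urysohnLevel n ≤ 1
  | 0 => zero_le_one
  | 1 => le_rfl
  | _ + 2 => max_le zero_le_one (min_le_left _ _)

theorem exists_urysohnLevel_mem_Ioo {a b : ℝ} (ha : 0 ≤ a) (hb : b ≤ 1) (hab : a < b) :
    ∃ n, urysohnLevel n ∈ Ioo a b := by
  obtain ⟨r, har, hrb⟩ := exists_rat_btwn hab
  obtain ⟨k, rfl⟩ := (Denumerable.eqv ℚ).symm.surjective r
  refine ⟨k + 2, ?_⟩
  have hr : urysohnLevel (k + 2) = (Denumerable.eqv ℚ).symm k := by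
    rw [urysohnLevel, min_eq_right (by linarith), max_eq_right (by linarith)]
  exact hr ▸ ⟨har, hrb⟩

namespace TopometricOn

variable {X : Type*} [TopologicalSpace X]

theorem t2Space_s19 (T : TopometricOn X) : T2Space X := by
  refine ⟨fun x y hxy => ?_⟩
  have hpos : 0 < T.d x y := pos_iff_ne_zero.2 fun h => hxy (T.eq_of_d_eq_zero x y h)
  obtain ⟨U, V, hU, hV, hx, hy, hUV⟩ := isOpen_prod_iff.1 (T.lsc.isOpen_preimage 0) x y hpos
  refine ⟨U, V, hU, hV, hx, hy, disjoint_left.2 fun z hzU hzV => ?_⟩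
  simpa [T.d_self] using hUV (mk_mem_prod hzU hzV)

theorem isClosed_setOf_exists_d_le [CompactSpace X] (T : TopometricOn X) {K : Set X}
    (hK : IsClosed K) (r : ℝ≥0∞) : IsClosed {z | ∃ p ∈ K, T.d p z ≤ r} := by
  have hclosed : IsClosed ({q : X × X | T.d q.1 q.2 ≤ r} ∩ K ×ˢ univ) :=
    (T.lsc.isClosed_preimage r).inter (hK.prod isClosed_univ)
  convert isClosedMap_snd_of_compactSpace _ hclosed using 1
  ext z
  simp [and_comm]

def lipFunctions (T : TopometricOn X) : Set (X → ℂ) :=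
  {f | Continuous f ∧ ∀ x y, edist (f x) (f y) ≤ T.d x y}

structure UrysohnData (X : Type*) [TopologicalSpace X] where
  T : TopometricOn X
  x₀ : X
  y₀ : X
  m : ℝ
  m_pos : 0 < m
  m_lt_d : ENNReal.ofReal m < T.d x₀ y₀

namespace UrysohnData

variable (S : UrysohnData X)

local notation "q" => urysohnLevel

def inner (n : ℕ) (V : Fin n → Set X) : Set X :=
  ⋃ (i : Fin n) (_ : q i < q n),
    {z | ∃ p ∈ closure (V i), S.T.d p z ≤ ENNReal.ofReal (S.m * (q n - q i))}

def outer (n : ℕ) (V : Fin n → Set X) : Set X :=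
  ⋂ (j : Fin n) (_ : q n < q j),
    {z | ∀ w ∉ V j, ENNReal.ofReal (S.m * (q j - q n)) < S.T.d z w}

-- `level n` is the set `V (urysohnLevel n)`; the sets are built in the order of the enumeration.
noncomputable def level : ℕ → Set X
  | 0 => openBetween {S.x₀} {z | ENNReal.ofReal S.m < S.T.d z S.y₀}
  | 1 => {S.y₀}ᶜ
  | n + 2 => openBetween (S.inner (n + 2) fun i => level i)
      (S.outer (n + 2) fun i => level i)

theorem level_zero : S.level 0 = openBetween {S.x₀} {z | ENNReal.ofReal S.m < S.T.d z S.y₀} := by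
  rw [level]

theorem level_one : S.level 1 = {S.y₀}ᶜ := by
  rw [level]

theorem level_add_two (n : ℕ) : S.level (n + 2) =
    openBetween (S.inner (n + 2) fun i => S.level i) (S.outer (n + 2) fun i => S.level i) := by
  rw [level]

theorem isOpen_level : ∀ n, IsOpen (S.level n)
  | 0 => S.level_zero ▸ isOpen_openBetween _ _
  | 1 => have := S.T.t2Space_s19; S.level_one ▸ isOpen_compl_singleton
  | n + 2 => S.level_add_two n ▸ isOpen_openBetween _ _

def Margin (i j : ℕ) : Prop :=
  ∀ p ∈ closure (S.level i), ∀ w ∉ S.level j, ENNReal.ofReal (S.m * (q j - q i)) < S.T.d p w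

theorem inner_subset_outer {n : ℕ} (h : ∀ i < n, ∀ j < n, q i < q j → S.Margin i j) :
    (S.inner n fun i => S.level i) ⊆ S.outer n fun i => S.level i := by
  intro z hz
  simp only [inner, mem_iUnion] at hz
  obtain ⟨i, hqi, p, hp, hpz⟩ := hz
  simp only [outer, mem_iInter]
  intro j hqj w hw
  by_contra! hzw
  have hlt := (h i i.2 j j.2 (hqi.trans hqj) p hp w hw).trans_le
    ((S.T.d_triangle p z w).trans (add_le_add hpz hzw))
  have hsum : S.m * (q n - q i) + S.m * (q j - q n) = S.m * (q j - q i) := by ring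
  rw [← ENNReal.ofReal_add (mul_nonneg S.m_pos.le (sub_nonneg.2 hqi.le))
    (mul_nonneg S.m_pos.le (sub_nonneg.2 hqj.le)), hsum] at hlt
  exact hlt.false

open scoped Classical in
noncomputable def heightBound (n : ℕ) (z : X) : ℝ :=
  if z ∈ S.level n then q n else 1

noncomputable def height (z : X) : ℝ :=
  ⨅ n, S.heightBound n z

theorem heightBound_nonneg (n : ℕ) (z : X) : 0 ≤ S.heightBound n z := by
  rw [heightBound]
  split_ifs
  exacts [urysohnLevel_nonneg n, zero_le_one]

theorem height_nonneg (z : X) : 0 ≤ S.height z :=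
  le_ciInf fun n => S.heightBound_nonneg n z

theorem height_le_heightBound (n : ℕ) (z : X) : S.height z ≤ S.heightBound n z :=
  ciInf_le ⟨0, forall_mem_range.2 fun k => S.heightBound_nonneg k z⟩ n

theorem height_le_of_mem {n : ℕ} {z : X} (hz : z ∈ S.level n) : S.height z ≤ q n := by
  simpa [heightBound, hz] using S.height_le_heightBound n z

theorem height_le_one (z : X) : S.height z ≤ 1 := by
  simpa [heightBound, urysohnLevel] using S.height_le_heightBound 1 z

theorem exists_mem_level_of_height_lt {z : X} {s : ℝ} (hz : S.height z < s) (hs : s ≤ 1) :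
    ∃ n, z ∈ S.level n ∧ q n < s := by
  obtain ⟨n, hn⟩ := exists_lt_of_ciInf_lt hz
  by_cases hzn : z ∈ S.level n
  · exact ⟨n, hzn, by simpa [heightBound, hzn] using hn⟩
  · simp only [heightBound, hzn, if_false] at hn
    exact absurd hs hn.not_ge

variable [CompactSpace X]

theorem level_zero_spec : S.x₀ ∈ S.level 0 ∧
    closure (S.level 0) ⊆ {z | ENNReal.ofReal S.m < S.T.d z S.y₀} := by
  have := S.T.t2Space_s19
  have hopen : IsOpen {z | ENNReal.ofReal S.m < S.T.d z S.y₀} :=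
    (S.T.lsc.comp (continuous_id.prodMk continuous_const)).isOpen_preimage _
  rw [level_zero, ← singleton_subset_iff]
  exact openBetween_spec isClosed_singleton hopen (singleton_subset_iff.2 S.m_lt_d)

theorem isClosed_inner (n : ℕ) : IsClosed (S.inner n fun i => S.level i) :=
  isClosed_iUnion_of_finite fun _ => isClosed_iUnion_of_finite fun _ =>
    S.T.isClosed_setOf_exists_d_le isClosed_closure _

theorem isOpen_outer (n : ℕ) : IsOpen (S.outer n fun i => S.level i) := by
  refine isOpen_iInter_of_finite fun j => isOpen_iInter_of_finite fun _ => ?_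
  have hclosed := S.T.isClosed_setOf_exists_d_le (S.isOpen_level j).isClosed_compl
    (ENNReal.ofReal (S.m * (q j - q n)))
  convert hclosed.isOpen_compl using 1
  ext z
  simp [S.T.d_symm z]

theorem margin_zero_one : S.Margin 0 1 := by
  intro p hp w hw
  rw [level_one, mem_compl_iff, not_not, mem_singleton_iff] at hw
  subst hw
  simpa [urysohnLevel] using S.level_zero_spec.2 hp

theorem margin_extend : ∀ n, (∀ i < n, ∀ j < n, q i < q j → S.Margin i j) →
    (∀ i < n, q i < q n → S.Margin i n) ∧ (∀ j < n, q n < q j → S.Margin n j)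
  | 0, _ => ⟨fun _ hi => absurd hi (Nat.not_lt_zero _), fun _ hj => absurd hj (Nat.not_lt_zero _)⟩
  | 1, _ => by
    refine ⟨fun i hi _ => ?_, fun j hj hq => ?_⟩
    · obtain rfl : i = 0 := by omega
      exact S.margin_zero_one
    · obtain rfl : j = 0 := by omega
      exact absurd hq (by simp [urysohnLevel])
  | n + 2, h => by
    have := S.T.t2Space_s19
    obtain ⟨hinner, houter⟩ :=
      openBetween_spec (S.isClosed_inner _) (S.isOpen_outer _) (S.inner_subset_outer h)
    rw [← level_add_two] at hinner houter
    refine ⟨fun i hi hq p hp w hw => ?_, fun j hj hq p hp w hw => ?_⟩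
    · by_contra! hle
      exact hw (hinner (mem_iUnion₂.2 ⟨⟨i, hi⟩, hq, p, hp, hle⟩))
    · exact mem_iInter₂.1 (houter hp) ⟨j, hj⟩ hq w hw

theorem margin_of_lt_of_lt : ∀ n, ∀ i < n, ∀ j < n, q i < q j → S.Margin i j
  | 0 => fun _ hi => absurd hi (Nat.not_lt_zero _)
  | n + 1 => by
    intro i hi j hj hq
    have ih := margin_of_lt_of_lt n
    have hnew := S.margin_extend n ih
    rcases Nat.lt_succ_iff_lt_or_eq.1 hi with hi | rfl <;>
      rcases Nat.lt_succ_iff_lt_or_eq.1 hj with hj | rfl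
    · exact ih i hi j hj hq
    · exact hnew.1 i hi hq
    · exact hnew.2 j hj hq
    · exact absurd hq (lt_irrefl _)

theorem margin {i j : ℕ} (h : q i < q j) : S.Margin i j :=
  S.margin_of_lt_of_lt (max i j + 1) i (by omega) j (by omega) h

theorem closure_level_subset {i j : ℕ} (h : q i < q j) : closure (S.level i) ⊆ S.level j := by
  intro p hp
  by_contra hpj
  simpa [S.T.d_self] using S.margin h p hp p hpj

theorem mem_level_of_d_le {n k : ℕ} {w z : X} (hw : w ∈ S.level n) (hnk : q n < q k)
    (hd : S.T.d w z ≤ ENNReal.ofReal (S.m * (q k - q n))) : z ∈ S.level k := by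
  by_contra hz
  exact (S.margin hnk w (subset_closure hw) z hz).not_ge hd

theorem mem_level_of_height_lt {z : X} {c : ℕ} (hz : S.height z < q c) : z ∈ S.level c := by
  obtain ⟨n, hzn, hnc⟩ := S.exists_mem_level_of_height_lt hz (urysohnLevel_le_one c)
  exact S.closure_level_subset hnc (subset_closure hzn)

theorem height_x₀ : S.height S.x₀ = 0 :=
  le_antisymm (S.height_le_of_mem S.level_zero_spec.1) (S.height_nonneg _)

theorem height_y₀ : S.height S.y₀ = 1 := by
  refine le_antisymm (S.height_le_one _) (not_lt.1 fun hlt => ?_)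
  obtain ⟨n, hy₀, hn⟩ := S.exists_mem_level_of_height_lt hlt le_rfl
  have : S.y₀ ∈ S.level 1 := S.closure_level_subset (by simpa [urysohnLevel] using hn)
    (subset_closure hy₀)
  simp [level_one] at this

theorem continuous_height : Continuous S.height := by
  refine continuous_iff_continuousAt.2 fun z => tendsto_order.2 ⟨fun b hb => ?_, fun b hb => ?_⟩
  · rcases lt_or_ge b 0 with hb0 | hb0
    · exact Eventually.of_forall fun w => hb0.trans_le (S.height_nonneg w)
    obtain ⟨c, hbc, hcz⟩ := exists_urysohnLevel_mem_Ioo hb0 (S.height_le_one z) hb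
    obtain ⟨c', hcc', hc'z⟩ :=
      exists_urysohnLevel_mem_Ioo (urysohnLevel_nonneg c) (S.height_le_one z) hcz
    have hz : z ∉ closure (S.level c) := fun hz =>
      (S.height_le_of_mem (S.closure_level_subset hcc' hz)).not_gt hc'z
    filter_upwards [isClosed_closure.isOpen_compl.mem_nhds hz] with w hw
    exact hbc.trans_le (not_lt.1 fun h => hw (subset_closure (S.mem_level_of_height_lt h)))
  · rcases lt_or_ge 1 b with hb1 | hb1
    · exact Eventually.of_forall fun w => (S.height_le_one w).trans_lt hb1
    obtain ⟨n, hzn, hn⟩ := S.exists_mem_level_of_height_lt hb hb1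
    filter_upwards [(S.isOpen_level n).mem_nhds hzn] with w hw
    exact (S.height_le_of_mem hw).trans_lt hn

theorem height_le_height_add {z w : X} {r : ℝ} (hr : 0 ≤ r)
    (hd : S.T.d w z ≤ ENNReal.ofReal (S.m * r)) : S.height z ≤ S.height w + r := by
  by_contra! h
  obtain ⟨n, hwn, hn⟩ :=
    S.exists_mem_level_of_height_lt (z := w) (s := S.height z - r) (by linarith)
      (by linarith [S.height_le_one z])
  obtain ⟨k, hnk, hkz⟩ := exists_urysohnLevel_mem_Ioo (a := q n + r)
    (by linarith [urysohnLevel_nonneg n]) (S.height_le_one z) (by linarith)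
  have hzk : z ∈ S.level k := S.mem_level_of_d_le hwn (by linarith) <|
    hd.trans (ENNReal.ofReal_le_ofReal (mul_le_mul_of_nonneg_left (by linarith) S.m_pos.le))
  linarith [S.height_le_of_mem hzk]

theorem ofReal_mul_abs_sub_le (z w : X) :
    ENNReal.ofReal (S.m * |S.height z - S.height w|) ≤ S.T.d z w := by
  rcases eq_or_ne (S.T.d z w) ⊤ with htop | htop
  · simp [htop]
  set r := (S.T.d z w).toReal / S.m
  have hr : ENNReal.ofReal (S.m * r) = S.T.d z w := by
    rw [mul_div_cancel₀ _ S.m_pos.ne', ENNReal.ofReal_toReal htop]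
  have hr0 : 0 ≤ r := div_nonneg ENNReal.toReal_nonneg S.m_pos.le
  have h₁ := S.height_le_height_add hr0 (hr.trans (S.T.d_symm z w)).ge
  have h₂ := S.height_le_height_add (z := w) hr0 hr.ge
  rw [← hr]
  exact ENNReal.ofReal_le_ofReal
    (mul_le_mul_of_nonneg_left (abs_sub_le_iff.2 ⟨by linarith, by linarith⟩) S.m_pos.le)

end UrysohnData

theorem exists_mem_lipFunctions_lt_edist [CompactSpace X] (T : TopometricOn X) {x y : X}
    {r : ℝ≥0∞} (hr : r < T.d x y) : ∃ f ∈ T.lipFunctions, r < edist (f x) (f y) := by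
  obtain ⟨m, -, hrm, hmd⟩ := ENNReal.lt_iff_exists_real_btwn.1 hr
  have hm : 0 < m := ENNReal.ofReal_pos.1 (hrm.trans_le' bot_le)
  let S : UrysohnData X := ⟨T, x, y, m, hm, hmd⟩
  have hedist (z w : X) : edist ((m * S.height z : ℝ) : ℂ) ((m * S.height w : ℝ) : ℂ) =
      ENNReal.ofReal (m * |S.height z - S.height w|) := by
    rw [Complex.isometry_ofReal.edist_eq, edist_dist, Real.dist_eq, ← mul_sub, abs_mul,
      abs_of_pos hm]
  refine ⟨fun z => ((m * S.height z : ℝ) : ℂ),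
    ⟨Complex.continuous_ofReal.comp (continuous_const.mul S.continuous_height), fun z w => ?_⟩, ?_⟩
  · rw [hedist]
    exact S.ofReal_mul_abs_sub_le z w
  · rw [hedist, show S.height x = 0 from S.height_x₀, show S.height y = 1 from S.height_y₀]
    simpa using hrm

theorem d_eq_iSup_lipFunctions [CompactSpace X] (T : TopometricOn X) (x y : X) :
    T.d x y = ⨆ f : T.lipFunctions, edist ((f : X → ℂ) x) ((f : X → ℂ) y) := by
  refine le_antisymm (le_of_forall_lt fun r hr => ?_) (iSup_le fun f => f.2.2 x y)
  obtain ⟨f, hf, hlt⟩ := T.exists_mem_lipFunctions_lt_edist hr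
  exact hlt.trans_le (le_iSup_of_le ⟨f, hf⟩ le_rfl)

theorem d_eq_of_lipFunctions_eq [CompactSpace X] {T T' : TopometricOn X}
    (h : T.lipFunctions = T'.lipFunctions) : T.d = T'.d := by
  funext x y
  rw [T.d_eq_iSup_lipFunctions, T'.d_eq_iSup_lipFunctions, h]

end TopometricOn

section SupMetric

variable {X : Type*} {A : Set (X → ℂ)}

noncomputable def supMetric (A : Set (X → ℂ)) (x y : X) : ℝ≥0∞ :=
  ⨆ f : A, edist ((f : X → ℂ) x) ((f : X → ℂ) y)

theorem edist_le_supMetric {f : X → ℂ} (hf : f ∈ A) (x y : X) :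
    edist (f x) (f y) ≤ supMetric A x y :=
  le_iSup (fun g : A => edist ((g : X → ℂ) x) ((g : X → ℂ) y)) ⟨f, hf⟩

theorem eq_of_supMetric_eq_zero (h_sep : ∀ x y : X, x ≠ y → ∃ f ∈ A, f x ≠ f y) {x y : X}
    (h : supMetric A x y = 0) : x = y := by
  by_contra hxy
  obtain ⟨f, hf, hfxy⟩ := h_sep x y hxy
  exact hfxy (edist_eq_zero.1 (le_zero_iff.1 (h ▸ edist_le_supMetric hf x y)))

theorem exists_mem_sub_eq (h_smul : ∀ f ∈ A, ∀ α : ℂ, ‖α‖ ≤ 1 → (fun x => α * f x) ∈ A)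
    {g : X → ℂ} (hg : g ∈ A) {x y : X} {c : ℂ} (hc : ‖c‖ ≤ ‖g x - g y‖) :
    ∃ g' ∈ A, g' x - g' y = c := by
  refine ⟨fun z => c / (g x - g y) * g z, h_smul g hg _ ?_, ?_⟩
  · rw [norm_div]
    exact div_le_one_of_le₀ hc (norm_nonneg _)
  · rw [← mul_sub, div_mul_cancel_of_imp]
    intro h
    rw [h, norm_zero] at hc
    exact norm_le_zero_iff.1 hc

theorem exists_mem_near_of_edist_le (h_convex : Convex ℝ A)
    (h_smul : ∀ f ∈ A, ∀ α : ℂ, ‖α‖ ≤ 1 → (fun x => α * f x) ∈ A)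
    (h_const : ∀ α : ℂ, (fun _ : X => α) ∈ A) {x y : X} {a b : ℂ}
    (hab : edist a b ≤ supMetric A x y) {ε : ℝ} (hε : 0 < ε) :
    ∃ g ∈ A, ‖a - g x‖ < ε ∧ ‖b - g y‖ < ε := by
  rcases eq_or_ne a b with rfl | hne
  · exact ⟨fun _ => a, h_const a, by simpa using hε, by simpa using hε⟩
  obtain ⟨s, hs0, hs1, hsε⟩ : ∃ s : ℝ, 0 < s ∧ s < 1 ∧ (1 - s ^ 2) * ‖a - b‖ < ε := by
    have hlim : Tendsto (fun s : ℝ => (1 - s ^ 2) * ‖a - b‖) (𝓝[<] 1) (𝓝 0) := by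
      have := (((continuous_const.sub (continuous_pow 2)).mul continuous_const).tendsto (1 : ℝ)
        (f := fun s : ℝ => (1 - s ^ 2) * ‖a - b‖))
      simpa using this.mono_left nhdsWithin_le_nhds
    have hpos : ∀ᶠ s in 𝓝[<] (1 : ℝ), 0 < s := nhdsWithin_le_nhds (Ioi_mem_nhds one_pos)
    have hlt : ∀ᶠ s in 𝓝[<] (1 : ℝ), s < 1 := self_mem_nhdsWithin
    exact (hpos.and (hlt.and (hlim.eventually_lt_const hε))).exists
  have hpos : 0 < ‖a - b‖ := norm_pos_iff.2 (sub_ne_zero.2 hne)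
  obtain ⟨g, hg, hgxy⟩ : ∃ g ∈ A, ‖(s : ℂ) * (a - b)‖ ≤ ‖g x - g y‖ := by
    have hlt : ENNReal.ofReal (s * ‖a - b‖) < supMetric A x y := by
      refine lt_of_lt_of_le ?_ hab
      rw [edist_dist, dist_eq_norm]
      exact (ENNReal.ofReal_lt_ofReal_iff hpos).2 (by nlinarith)
    obtain ⟨⟨g, hg⟩, hgt⟩ := lt_iSup_iff.1 hlt
    rw [edist_dist, dist_eq_norm] at hgt
    refine ⟨g, hg, ?_⟩
    rw [norm_mul, Complex.norm_real, Real.norm_of_nonneg hs0.le]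
    exact ((ENNReal.ofReal_lt_ofReal_iff_of_nonneg (by positivity)).1 hgt).le
  obtain ⟨g', hg', hg'xy⟩ := exists_mem_sub_eq h_smul hg hgxy
  -- `g := s • g' + (1 - s) • k` has `g x = a` and `g y = a - s ^ 2 * (a - b)`.
  set k : ℂ := (a - s * g' x) / (1 - s)
  have hk : (1 - s : ℂ) * k = a - s * g' x := by
    refine mul_div_cancel₀ _ ?_
    rw [← Complex.ofReal_one, ← Complex.ofReal_sub]
    exact Complex.ofReal_ne_zero.2 (by linarith)
  refine ⟨s • g' + (1 - s) • fun _ => k,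
    h_convex hg' (h_const k) hs0.le (by linarith) (by ring), ?_, ?_⟩
  · have : a - (s • g' + (1 - s) • fun _ : X => k) x = 0 := by
      simp only [Pi.add_apply, Pi.smul_apply, Complex.real_smul]
      push_cast
      linear_combination (-1 : ℂ) * hk
    rw [this, norm_zero]
    exact hε
  · have : b - (s • g' + (1 - s) • fun _ : X => k) y = ((1 - s ^ 2 : ℝ) : ℂ) * (b - a) := by
      simp only [Pi.add_apply, Pi.smul_apply, Complex.real_smul]
      push_cast
      linear_combination (-1 : ℂ) * hk + (s : ℂ) * hg'xy
    rw [this, norm_mul, Complex.norm_real, Real.norm_of_nonneg (by nlinarith), norm_sub_rev]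
    exact hsε

variable [TopologicalSpace X]

theorem lowerSemicontinuous_supMetric (hAc : ∀ f ∈ A, Continuous f) :
    LowerSemicontinuous fun p : X × X => supMetric A p.1 p.2 :=
  lowerSemicontinuous_iSup fun f =>
    ((hAc f f.2).comp continuous_fst).edist ((hAc f f.2).comp continuous_snd)
      |>.lowerSemicontinuous

noncomputable def topometricOfSeparating [CompactSpace X] (A : Set (X → ℂ))
    (hAc : ∀ f ∈ A, Continuous f)
    (h_sep : ∀ x y : X, x ≠ y → ∃ f ∈ A, f x ≠ f y) : TopometricOn X where
  d := supMetric A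
  d_self x := by simp [supMetric]
  eq_of_d_eq_zero _ _ := eq_of_supMetric_eq_zero h_sep
  d_symm x y := iSup_congr fun _ => edist_comm _ _
  d_triangle x y z := iSup_le fun f => (edist_triangle _ ((f : X → ℂ) y) _).trans
    (add_le_add (edist_le_supMetric f.2 x y) (edist_le_supMetric f.2 y z))
  lsc := lowerSemicontinuous_supMetric hAc
  refines _ hU _ hx := exists_pos_forall_lt_mem_of_lowerSemicontinuous
    (lowerSemicontinuous_supMetric hAc) (fun _ _ => eq_of_supMetric_eq_zero h_sep) hU hx

theorem mem_of_edist_le_supMetric (hAc : ∀ f ∈ A, Continuous f) (h_convex : Convex ℝ A)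
    (h_smul : ∀ f ∈ A, ∀ α : ℂ, ‖α‖ ≤ 1 → (fun x => α * f x) ∈ A)
    (h_const : ∀ α : ℂ, (fun _ : X => α) ∈ A)
    (h_closed : ∀ f : X → ℂ, Continuous f → f ∉ A →
      ∃ x y : X, ∃ ε > (0 : ℝ), ∀ g : X → ℂ, Continuous g →
        ‖f x - g x‖ < ε → ‖f y - g y‖ < ε → g ∉ A)
    {f : X → ℂ} (hf : Continuous f) (hlip : ∀ x y, edist (f x) (f y) ≤ supMetric A x y) :
    f ∈ A := by
  by_contra hfA
  obtain ⟨x, y, ε, hε, hfar⟩ := h_closed f hf hfA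
  obtain ⟨g, hg, hgx, hgy⟩ := exists_mem_near_of_edist_le h_convex h_smul h_const (hlip x y) hε
  exact hfar g (hAc g hg) hgx hgy hg

end SupMetric

theorem l1Set_eq_continuous_one_lipschitz_general {X : Type*} [TopologicalSpace X] [CompactSpace X]
    (A : Set (X → ℂ)) (hAc : ∀ f ∈ A, Continuous f)
    (h_convex : Convex ℝ A)
    (h_smul : ∀ f ∈ A, ∀ α : ℂ, ‖α‖ ≤ 1 → (fun x => α * f x) ∈ A)
    (h_sep : ∀ x y : X, x ≠ y → ∃ f ∈ A, f x ≠ f y)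
    (h_const : ∀ α : ℂ, (fun _ : X => α) ∈ A)
    (h_closed : ∀ f : X → ℂ, Continuous f → f ∉ A →
      ∃ x y : X, ∃ ε > (0 : ℝ), ∀ g : X → ℂ, Continuous g →
        ‖f x - g x‖ < ε → ‖f y - g y‖ < ε → g ∉ A) :
    ∃ T : TopometricOn X,
      (∀ x y : X, T.d x y = ⨆ f : A, edist ((f : X → ℂ) x) ((f : X → ℂ) y)) ∧
      A = {f : X → ℂ | Continuous f ∧ ∀ x y, edist (f x) (f y) ≤ T.d x y} ∧
      ∀ T' : TopometricOn X,
        A = {f : X → ℂ | Continuous f ∧ ∀ x y, edist (f x) (f y) ≤ T'.d x y} →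
        T'.d = T.d := by
  let T := topometricOfSeparating A hAc h_sep
  have hA : A = T.lipFunctions := Set.ext fun f =>
    ⟨fun hf => ⟨hAc f hf, edist_le_supMetric hf⟩,
      fun hf => mem_of_edist_le_supMetric hAc h_convex h_smul h_const h_closed hf.1 hf.2⟩
  exact ⟨T, fun _ _ => rfl, hA, fun T' hA' =>
    TopometricOn.d_eq_of_lipFunctions_eq (hA'.symm.trans hA)⟩

/-- an `L(1)`-set `A ⊆ C(X, ℂ)` on a compact space `X` is exactly the set
of continuous `1`-Lipschitz functions for a (unique) topometric structure on `X`, whose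
metric is `d(x,y) = sup_{f ∈ A} |f(x) − f(y)|`. -/
theorem l1Set_eq_continuous_one_lipschitz {X : Type*} [TopologicalSpace X] [CompactSpace X]
    (A : Set (X → ℂ)) (hAc : ∀ f ∈ A, Continuous f)
    (h_convex : Convex ℝ A)
    (h_smul : ∀ f ∈ A, ∀ α : ℂ, ‖α‖ ≤ 1 → (fun x => α * f x) ∈ A)
    (h_abs : ∀ f ∈ A, (fun x => (‖f x‖ : ℂ)) ∈ A)
    (h_sep : ∀ x y : X, x ≠ y → ∃ f ∈ A, f x ≠ f y)
    (h_const : ∀ α : ℂ, (fun _ : X => α) ∈ A)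
    (h_closed : ∀ f : X → ℂ, Continuous f → f ∉ A →
      ∃ x y : X, ∃ ε > (0 : ℝ), ∀ g : X → ℂ, Continuous g →
        ‖f x - g x‖ < ε → ‖f y - g y‖ < ε → g ∉ A) :
    ∃ T : TopometricOn X,
      (∀ x y : X, T.d x y = ⨆ f : A, edist ((f : X → ℂ) x) ((f : X → ℂ) y)) ∧
      A = {f : X → ℂ | Continuous f ∧ ∀ x y, edist (f x) (f y) ≤ T.d x y} ∧
      ∀ T' : TopometricOn X,
        A = {f : X → ℂ | Continuous f ∧ ∀ x y, edist (f x) (f y) ≤ T'.d x y} →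
        T'.d = T.d :=
  l1Set_eq_continuous_one_lipschitz_general A hAc h_convex h_smul h_sep h_const h_closed
end
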